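/- arXiv:2308.02477 — 6 statements merged into one kernel-verified Lean document; each statement's English description precedes it below -/
import Mathlib

section
/- Let G be a d-regular graph with spectral expansion at most λ, F ⊂ V of size f, Q = Â[V∖F], and α_F = max_{v∈V∖F} deg_F(v)/d the adversarial density. Then max(1 − α_F, 1 − (1+λ)f/n) ≤ λ₁(Q) ≤ 1 − (1−λ)f/n. -/
/-!
Both lower bounds come from the Rayleigh quotient of `Q` at the all-ones vector of `V ∖ F`,
which equals `1 - e(V ∖ F, F) / (d (n - f))`: the cut `e(V ∖ F, F) / d` is at most
`(n - f) α_F` by the definition of `α_F`, and at most `(1 + λ) f (n - f) / n` by the expander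
mixing lemma. For the upper bound, extend the top eigenvector of `Q` by zero to a unit vector
`x` vanishing on `F`. Splitting off its mean gives `λ₁(Q) = ⟨x, Âx⟩ ≤ s + λ (1 - s)` with
`s = (∑ x)² / n ≤ (n - f) / n` by Cauchy–Schwarz; when `λ > 1` one uses `⟨x, Âx⟩ ≤ 1` instead.

The mixing bound `|⟨y, Âz⟩| ≤ λ ‖y‖ ‖z‖` for `y ⊥ 1` is read off the eigenbasis: if `λ < 1`,
every eigenvector but the top one is orthogonal to `1`, so `y` has no top component; otherwise
all eigenvalues of `Â` lie in `[-1, 1]` by Gershgorin's theorem.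
-/

open Matrix Finset

/-- An orthonormal eigenbasis of a real symmetric matrix, with eigenvalues listed in
decreasing order (with multiplicity). -/
def EigSystem {ι : Type} [Fintype ι] {k : ℕ} (M : Matrix ι ι ℝ)
    (μ : Fin k → ℝ) (φ : Fin k → ι → ℝ) : Prop :=
  Fintype.card ι = k ∧
  (∀ a b, ∑ i, φ a i * φ b i = if a = b then (1 : ℝ) else 0) ∧
  (∀ a, M.mulVec (φ a) = μ a • φ a) ∧
  (∀ a b : Fin k, a ≤ b → μ b ≤ μ a)

namespace EigSystem

variable {ι : Type} [Fintype ι] {k : ℕ} {M : Matrix ι ι ℝ} {μ : Fin k → ℝ}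
  {φ : Fin k → ι → ℝ}

theorem dotProduct_self (h : EigSystem M μ φ) (a : Fin k) : φ a ⬝ᵥ φ a = 1 :=
  (h.2.1 a a).trans (if_pos rfl)

theorem dotProduct_mulVec_self (h : EigSystem M μ φ) (a : Fin k) :
    φ a ⬝ᵥ M *ᵥ φ a = μ a := by
  rw [h.2.2.1 a, dotProduct_smul, h.dotProduct_self, smul_eq_mul, mul_one]

theorem of_mul_transpose_of (h : EigSystem M μ φ) : of φ * (of φ)ᵀ = 1 := by
  ext a b
  simpa [Matrix.mul_apply, Matrix.one_apply] using h.2.1 a b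

theorem transpose_of_mul_of [DecidableEq ι] (h : EigSystem M μ φ) : (of φ)ᵀ * of φ = 1 :=
  (mul_eq_one_comm_of_equiv (Fintype.equivFinOfCardEq h.1).symm).mp h.of_mul_transpose_of

theorem mulVec_dotProduct_mulVec (h : EigSystem M μ φ) (x y : ι → ℝ) :
    (of φ *ᵥ x) ⬝ᵥ (of φ *ᵥ y) = x ⬝ᵥ y := by
  classical
  rw [← vecMul_transpose, ← dotProduct_mulVec, mulVec_mulVec, h.transpose_of_mul_of,
    one_mulVec]

theorem eq_transpose_mul_diagonal_mul (h : EigSystem M μ φ) :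
    M = (of φ)ᵀ * diagonal μ * of φ := by
  classical
  have hcols : M * (of φ)ᵀ = (of φ)ᵀ * diagonal μ := by
    ext i a
    rw [mul_diagonal]
    simpa [Matrix.mul_apply, mulVec, dotProduct, mul_comm] using congrFun (h.2.2.1 a) i
  rw [← hcols, Matrix.mul_assoc, h.transpose_of_mul_of, Matrix.mul_one]

theorem dotProduct_mulVec_eq_sum (h : EigSystem M μ φ) (x y : ι → ℝ) :
    x ⬝ᵥ M *ᵥ y = ∑ a, μ a * ((of φ *ᵥ x) a * (of φ *ᵥ y) a) := by
  rw [h.eq_transpose_mul_diagonal_mul, ← mulVec_mulVec, ← mulVec_mulVec, dotProduct_mulVec,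
    vecMul_transpose, dotProduct]
  simp only [mulVec_diagonal]
  exact Finset.sum_congr rfl fun a _ => by ring

theorem dotProduct_mulVec_le (h : EigSystem M μ φ) (hk : 0 < k) (x : ι → ℝ) :
    x ⬝ᵥ M *ᵥ x ≤ μ ⟨0, hk⟩ * (x ⬝ᵥ x) := by
  rw [h.dotProduct_mulVec_eq_sum, ← h.mulVec_dotProduct_mulVec x x, dotProduct,
    Finset.mul_sum]
  exact Finset.sum_le_sum fun a _ =>
    mul_le_mul_of_nonneg_right (h.2.2.2 ⟨0, hk⟩ a (Nat.zero_le _)) (mul_self_nonneg _)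

theorem abs_dotProduct_mulVec_le (h : EigSystem M μ φ) {c : ℝ} (hc : 0 ≤ c) {x : ι → ℝ}
    (hμ : ∀ a, (of φ *ᵥ x) a ≠ 0 → |μ a| ≤ c) (y : ι → ℝ) :
    |x ⬝ᵥ M *ᵥ y| ≤ c * (√(x ⬝ᵥ x) * √(y ⬝ᵥ y)) := by
  set x' := of φ *ᵥ x
  set y' := of φ *ᵥ y
  have hterm : ∀ a, |μ a * (x' a * y' a)| ≤ c * (|x' a| * |y' a|) := by
    intro a
    rw [abs_mul, abs_mul]
    by_cases hx : x' a = 0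
    · simp [hx]
    · exact mul_le_mul_of_nonneg_right (hμ a hx) (by positivity)
  calc |x ⬝ᵥ M *ᵥ y| ≤ ∑ a, c * (|x' a| * |y' a|) := by
        rw [h.dotProduct_mulVec_eq_sum]
        exact (Finset.abs_sum_le_sum_abs _ _).trans (Finset.sum_le_sum fun a _ => hterm a)
    _ ≤ c * (√(x' ⬝ᵥ x') * √(y' ⬝ᵥ y')) := by
        rw [← Finset.mul_sum]
        refine mul_le_mul_of_nonneg_left ?_ hc
        simpa [dotProduct, sq_abs, sq] using
          Real.sum_mul_le_sqrt_mul_sqrt univ (|x' ·|) (|y' ·|)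
    _ = c * (√(x ⬝ᵥ x) * √(y ⬝ᵥ y)) := by
        rw [h.mulVec_dotProduct_mulVec, h.mulVec_dotProduct_mulVec]

theorem abs_le_of_ne_zero (h : EigSystem M μ φ) (hk : 2 ≤ k) {lam : ℝ}
    (hlam : max |μ ⟨1, by omega⟩| |μ ⟨k - 1, by omega⟩| ≤ lam) {t : Fin k}
    (ht : t ≠ ⟨0, by omega⟩) : |μ t| ≤ lam := by
  have h1 : (⟨1, by omega⟩ : Fin k) ≤ t := by
    show 1 ≤ t.1
    exact Nat.one_le_iff_ne_zero.mpr fun h0 => ht (Fin.ext h0)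
  have h2 : t ≤ ⟨k - 1, by omega⟩ := by
    show t.1 ≤ k - 1
    omega
  exact ((abs_le_max_abs_abs (h.2.2.2 _ _ h2) (h.2.2.2 _ _ h1)).trans_eq (max_comm _ _)).trans
    hlam

end EigSystem

theorem Matrix.IsSymm.dotProduct_eq_zero_of_mulVec_eq_smul {ι : Type} [Fintype ι]
    {M : Matrix ι ι ℝ} (hM : M.IsSymm) {u v : ι → ℝ} {a b : ℝ} (hu : M *ᵥ u = a • u)
    (hv : M *ᵥ v = b • v) (hab : a ≠ b) : u ⬝ᵥ v = 0 := by
  have : a * (u ⬝ᵥ v) = b * (u ⬝ᵥ v) := by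
    rw [← smul_eq_mul, ← smul_dotProduct, ← hu, dotProduct_comm, dotProduct_mulVec,
      ← mulVec_transpose, hM.eq, hv, smul_dotProduct, dotProduct_comm, smul_eq_mul]
  exact (mul_eq_mul_right_iff.mp this).resolve_left hab

section Centering

variable {ι : Type} [Fintype ι]

noncomputable def centered (x : ι → ℝ) : ι → ℝ := x - ((∑ i, x i) / Fintype.card ι) • 1

theorem one_dotProduct_mulVec {M : Matrix ι ι ℝ} (hM : M.IsSymm) (h1 : M *ᵥ 1 = 1)
    (z : ι → ℝ) : 1 ⬝ᵥ M *ᵥ z = ∑ i, z i := by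
  rw [dotProduct_mulVec, ← mulVec_transpose, hM.eq, h1, one_dotProduct]

variable [Nonempty ι]

theorem sum_centered (x : ι → ℝ) : ∑ i, centered x i = 0 := by
  have : (Fintype.card ι : ℝ) ≠ 0 := Nat.cast_ne_zero.2 Fintype.card_ne_zero
  simp [centered, Finset.sum_sub_distrib, mul_div_cancel₀ _ this]

theorem centered_dotProduct_centered (x : ι → ℝ) :
    centered x ⬝ᵥ centered x = x ⬝ᵥ x - (∑ i, x i) ^ 2 / Fintype.card ι := by
  have : (Fintype.card ι : ℝ) ≠ 0 := Nat.cast_ne_zero.2 Fintype.card_ne_zero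
  simp only [centered, sub_dotProduct, dotProduct_sub, smul_dotProduct, dotProduct_smul,
    one_dotProduct_one, smul_eq_mul]
  simp only [dotProduct_one, one_dotProduct]
  field_simp
  ring

theorem dotProduct_mulVec_eq_centered {M : Matrix ι ι ℝ} (hM : M.IsSymm) (h1 : M *ᵥ 1 = 1)
    (x y : ι → ℝ) :
    x ⬝ᵥ M *ᵥ y
      = centered x ⬝ᵥ M *ᵥ centered y + (∑ i, x i) * (∑ i, y i) / Fintype.card ι := by
  have : (Fintype.card ι : ℝ) ≠ 0 := Nat.cast_ne_zero.2 Fintype.card_ne_zero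
  set a := (∑ i, x i) / Fintype.card ι
  set b := (∑ i, y i) / Fintype.card ι
  have hx : x = centered x + a • 1 := (sub_add_cancel _ _).symm
  have hy : y = centered y + b • 1 := (sub_add_cancel _ _).symm
  calc x ⬝ᵥ M *ᵥ y = (centered x + a • 1) ⬝ᵥ M *ᵥ (centered y + b • 1) := by rw [← hx, ← hy]
    _ = centered x ⬝ᵥ M *ᵥ centered y + a * b * Fintype.card ι := by
      simp only [mulVec_add, mulVec_smul, h1, add_dotProduct, dotProduct_add, smul_dotProduct,
        dotProduct_smul, one_dotProduct_mulVec hM h1, one_dotProduct_one, smul_eq_mul]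
      simp only [dotProduct_one, sum_centered]
      ring
    _ = _ := by
      simp only [a, b]
      field_simp

end Centering

section Inclusion

variable {ι κ : Type} [Fintype ι] [Fintype κ] [DecidableEq ι]

theorem indicator_dotProduct (S : Finset ι) (w : ι → ℝ) :
    (fun i => if i ∈ S then 1 else 0) ⬝ᵥ w = ∑ i ∈ S, w i := by
  simp [dotProduct, ite_mul]

theorem dotProduct_submatrix_mulVec (M : Matrix ι ι ℝ) (e : κ → ι) (u v : κ → ℝ) :
    u ⬝ᵥ M.submatrix e e *ᵥ v
      = ((1 : Matrix ι ι ℝ).submatrix id e *ᵥ u) ⬝ᵥ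
          M *ᵥ ((1 : Matrix ι ι ℝ).submatrix id e *ᵥ v) := by
  have hM : M.submatrix e e
      = (1 : Matrix ι ι ℝ).submatrix e id * M * (1 : Matrix ι ι ℝ).submatrix id e := by
    ext i j
    simp [Matrix.mul_apply, one_apply]
  rw [hM, ← mulVec_mulVec, ← mulVec_mulVec, dotProduct_mulVec u, ← mulVec_transpose,
    transpose_submatrix, transpose_one]

variable (p : ι → Prop) [DecidablePred p]

theorem submatrix_val_mulVec_one :
    (1 : Matrix ι ι ℝ).submatrix id (Subtype.val : {i // p i} → ι) *ᵥ 1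
      = fun i => if p i then 1 else 0 := by
  ext i
  by_cases hp : p i
  · rw [mulVec, dotProduct, Finset.sum_eq_single ⟨i, hp⟩] <;>
      simp [one_apply, hp, Subtype.ext_iff, eq_comm]
  · simp only [mulVec, dotProduct, hp, if_false]
    exact Finset.sum_eq_zero fun j _ => by
      simp [one_apply, show i ≠ j.1 from fun h => hp (h ▸ j.2)]

theorem submatrix_val_mulVec_apply_of_not {i : ι} (hi : ¬ p i) (u : {i // p i} → ℝ) :
    ((1 : Matrix ι ι ℝ).submatrix id (Subtype.val : {i // p i} → ι) *ᵥ u) i = 0 :=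
  Finset.sum_eq_zero fun j _ => by
    simp [one_apply, show i ≠ j.1 from fun h => hi (h ▸ j.2)]

end Inclusion

section Graph

variable {V : Type} {d : ℕ} {G : SimpleGraph V} [DecidableRel G.Adj]

theorem isSymm_normAdj : ((d : ℝ)⁻¹ • G.adjMatrix ℝ).IsSymm :=
  (G.isSymm_adjMatrix).smul _

variable [Fintype V]

theorem normAdj_mulVec_one (hd : d ≠ 0) (hreg : G.IsRegularOfDegree d) :
    ((d : ℝ)⁻¹ • G.adjMatrix ℝ) *ᵥ 1 = 1 := by
  ext v
  rw [smul_mulVec, Pi.smul_apply, ← Function.const_one,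
    SimpleGraph.adjMatrix_mulVec_const_apply_of_regular hreg]
  simp [hd]

theorem normAdj_mulVec_indicator_apply [DecidableEq V] (S : Finset V) (v : V) :
    (((d : ℝ)⁻¹ • G.adjMatrix ℝ) *ᵥ fun i => if i ∈ S then 1 else 0) v
      = (S.filter (G.Adj v)).card / d := by
  rw [smul_mulVec, Pi.smul_apply, SimpleGraph.adjMatrix_mulVec_apply, Finset.sum_boole,
    smul_eq_mul, inv_mul_eq_div]
  congr 3
  ext w
  simp [and_comm]

theorem abs_le_one_of_normAdj_mulVec_eq_smul (hreg : G.IsRegularOfDegree d)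
    {m : ℝ} {x : V → ℝ} (hx : x ≠ 0) (hm : ((d : ℝ)⁻¹ • G.adjMatrix ℝ) *ᵥ x = m • x) :
    |m| ≤ 1 := by
  classical
  have hev : Module.End.HasEigenvalue (toLin' ((d : ℝ)⁻¹ • G.adjMatrix ℝ)) m :=
    Module.End.hasEigenvalue_of_hasEigenvector
      ⟨Module.End.mem_eigenspace_iff.mpr (by rwa [toLin'_apply]), hx⟩
  obtain ⟨k, hk⟩ := eigenvalue_mem_ball hev
  have hrow : ∑ j, G.adjMatrix ℝ k j = d := by
    rw [← mul_one (d : ℝ), ← SimpleGraph.adjMatrix_mulVec_const_apply_of_regular hreg (v := k)]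
    simp [mulVec, dotProduct]
  calc |m| = dist m (((d : ℝ)⁻¹ • G.adjMatrix ℝ) k k) := by simp
    _ ≤ ∑ j ∈ univ.erase k, ‖((d : ℝ)⁻¹ • G.adjMatrix ℝ) k j‖ := hk
    _ ≤ ∑ j, (d : ℝ)⁻¹ * G.adjMatrix ℝ k j := by
      refine (Finset.sum_le_sum_of_subset_of_nonneg (erase_subset _ _)
        fun j _ _ => by positivity).trans_eq (Finset.sum_congr rfl fun j _ => ?_)
      simp [SimpleGraph.adjMatrix_apply]
      positivity
    _ = (d : ℝ)⁻¹ * d := by rw [← Finset.mul_sum, hrow]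
    _ ≤ 1 := inv_mul_le_one

end Graph

section SpectralExpansion

variable {V : Type} [Fintype V] {n d : ℕ} {G : SimpleGraph V} [DecidableRel G.Adj]
  {μ : Fin n → ℝ} {φ : Fin n → V → ℝ} {lam : ℝ}

theorem EigSystem.abs_le_one (hreg : G.IsRegularOfDegree d)
    (hA : EigSystem ((d : ℝ)⁻¹ • G.adjMatrix ℝ) μ φ) (t : Fin n) : |μ t| ≤ 1 :=
  abs_le_one_of_normAdj_mulVec_eq_smul hreg
    (fun h0 => by simpa [h0] using hA.dotProduct_self t) (hA.2.2.1 t)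

theorem EigSystem.dotProduct_one_eq_zero (hd : d ≠ 0) (hreg : G.IsRegularOfDegree d)
    (hA : EigSystem ((d : ℝ)⁻¹ • G.adjMatrix ℝ) μ φ) (hn : 2 ≤ n)
    (hlam : max |μ ⟨1, by omega⟩| |μ ⟨n - 1, by omega⟩| ≤ lam) (hlam1 : lam < 1)
    {t : Fin n} (ht : t ≠ ⟨0, by omega⟩) : φ t ⬝ᵥ 1 = 0 := by
  have hμ : μ t ≠ 1 := fun h1 => by
    have := hA.abs_le_of_ne_zero hn hlam ht
    rw [h1, abs_one] at this
    linarith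
  exact isSymm_normAdj.dotProduct_eq_zero_of_mulVec_eq_smul (hA.2.2.1 t)
    (by rw [normAdj_mulVec_one hd hreg, one_smul]) hμ

theorem EigSystem.of_mulVec_apply_zero_eq_zero (hd : d ≠ 0) (hreg : G.IsRegularOfDegree d)
    (hA : EigSystem ((d : ℝ)⁻¹ • G.adjMatrix ℝ) μ φ) (hn : 2 ≤ n)
    (hlam : max |μ ⟨1, by omega⟩| |μ ⟨n - 1, by omega⟩| ≤ lam) (hlam1 : lam < 1)
    {y : V → ℝ} (hy : ∑ i, y i = 0) : (of φ *ᵥ y) ⟨0, by omega⟩ = 0 := by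
  set t₀ : Fin n := ⟨0, by omega⟩
  have hcoeff : ∀ w : V → ℝ, (of φ *ᵥ w) ⬝ᵥ (of φ *ᵥ 1) = (of φ *ᵥ w) t₀ * (of φ *ᵥ 1) t₀ :=
    fun w => Finset.sum_eq_single t₀
      (fun t _ ht => by rw [show (of φ *ᵥ 1) t = φ t ⬝ᵥ 1 from rfl,
        hA.dotProduct_one_eq_zero hd hreg hn hlam hlam1 ht, mul_zero])
      (fun h => absurd (mem_univ t₀) h)
  have hy0 : (of φ *ᵥ y) t₀ * (of φ *ᵥ 1) t₀ = 0 := by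
    rw [← hcoeff, hA.mulVec_dotProduct_mulVec, dotProduct_one, hy]
  have hone : (of φ *ᵥ 1) t₀ * (of φ *ᵥ 1) t₀ ≠ 0 := by
    rw [← hcoeff, hA.mulVec_dotProduct_mulVec, one_dotProduct_one, hA.1]
    exact Nat.cast_ne_zero.mpr (by omega)
  exact (mul_eq_zero.mp hy0).resolve_right (left_ne_zero_of_mul hone)

theorem abs_dotProduct_normAdj_mulVec_le (hd : d ≠ 0) (hreg : G.IsRegularOfDegree d)
    (hA : EigSystem ((d : ℝ)⁻¹ • G.adjMatrix ℝ) μ φ) (hn : 2 ≤ n)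
    (hlam : max |μ ⟨1, by omega⟩| |μ ⟨n - 1, by omega⟩| ≤ lam)
    {y : V → ℝ} (hy : ∑ i, y i = 0) (z : V → ℝ) :
    |y ⬝ᵥ ((d : ℝ)⁻¹ • G.adjMatrix ℝ) *ᵥ z| ≤ lam * (√(y ⬝ᵥ y) * √(z ⬝ᵥ z)) := by
  have hlam0 : 0 ≤ lam := (abs_nonneg _).trans ((le_max_left _ _).trans hlam)
  refine hA.abs_dotProduct_mulVec_le hlam0 (fun t ht => ?_) z
  by_cases ht0 : t = ⟨0, by omega⟩
  · rcases le_or_gt 1 lam with hl | hl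
    · exact (hA.abs_le_one hreg t).trans hl
    · exact absurd (ht0 ▸ hA.of_mulVec_apply_zero_eq_zero hd hreg hn hlam hl hy) ht
  · exact hA.abs_le_of_ne_zero hn hlam ht0

theorem dotProduct_normAdj_mulVec_le (hd : d ≠ 0) (hreg : G.IsRegularOfDegree d)
    (hA : EigSystem ((d : ℝ)⁻¹ • G.adjMatrix ℝ) μ φ) (hn : 2 ≤ n)
    (hlam : max |μ ⟨1, by omega⟩| |μ ⟨n - 1, by omega⟩| ≤ lam) (x y : V → ℝ) :
    x ⬝ᵥ ((d : ℝ)⁻¹ • G.adjMatrix ℝ) *ᵥ y ≤ (∑ i, x i) * (∑ i, y i) / n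
      + lam * (√(centered x ⬝ᵥ centered x) * √(centered y ⬝ᵥ centered y)) := by
  have : Nonempty V := Fintype.card_pos_iff.mp (by rw [hA.1]; omega)
  rw [dotProduct_mulVec_eq_centered isSymm_normAdj (normAdj_mulVec_one hd hreg), hA.1]
  linarith [le_abs_self (centered x ⬝ᵥ ((d : ℝ)⁻¹ • G.adjMatrix ℝ) *ᵥ centered y),
    abs_dotProduct_normAdj_mulVec_le hd hreg hA hn hlam (sum_centered x) (centered y)]

end SpectralExpansion

section PrincipalSubmatrix

variable {V : Type} [Fintype V] [DecidableEq V] {n d : ℕ} {G : SimpleGraph V}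
  [DecidableRel G.Adj] {μ : Fin n → ℝ} {φ : Fin n → V → ℝ} {lam : ℝ}

theorem centered_indicator_dotProduct_self [Nonempty V] (S : Finset V) :
    centered (fun i => if i ∈ S then 1 else 0) ⬝ᵥ centered (fun i => if i ∈ S then 1 else 0)
      = #S * (Fintype.card V - #S) / Fintype.card V := by
  have : (Fintype.card V : ℝ) ≠ 0 := Nat.cast_ne_zero.2 Fintype.card_ne_zero
  rw [centered_dotProduct_centered, indicator_dotProduct]
  simp only [Finset.sum_boole, Finset.filter_mem_eq_inter, Finset.univ_inter, inter_self]
  field_simp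

theorem sum_compl_card_filter_adj_le (hd : d ≠ 0) (hreg : G.IsRegularOfDegree d)
    (hA : EigSystem ((d : ℝ)⁻¹ • G.adjMatrix ℝ) μ φ) (hn : 2 ≤ n)
    (hlam : max |μ ⟨1, by omega⟩| |μ ⟨n - 1, by omega⟩| ≤ lam) (F : Finset V) :
    ∑ v ∈ Fᶜ, ((F.filter (G.Adj v)).card : ℝ) / d ≤ (1 + lam) * (#F * #Fᶜ / n) := by
  have : Nonempty V := Fintype.card_pos_iff.mp (by rw [hA.1]; omega)
  have hcard : (#F : ℝ) + #Fᶜ = n := by rw [← hA.1]; exact_mod_cast card_add_card_compl F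
  have hF : (n : ℝ) - #F = #Fᶜ := by linarith
  have hFc : (n : ℝ) - #Fᶜ = #F := by linarith
  calc ∑ v ∈ Fᶜ, ((F.filter (G.Adj v)).card : ℝ) / d
      = (fun i => if i ∈ Fᶜ then 1 else 0) ⬝ᵥ
          ((d : ℝ)⁻¹ • G.adjMatrix ℝ) *ᵥ (fun i => if i ∈ F then 1 else 0) := by
        simp only [indicator_dotProduct, normAdj_mulVec_indicator_apply]
    _ ≤ _ := dotProduct_normAdj_mulVec_le hd hreg hA hn hlam _ _
    _ = (1 + lam) * (#F * #Fᶜ / n) := by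
        rw [centered_indicator_dotProduct_self, centered_indicator_dotProduct_self, hA.1, hF, hFc,
          mul_comm (#Fᶜ : ℝ), Real.mul_self_sqrt (by positivity)]
        simp only [Finset.sum_boole, Finset.filter_mem_eq_inter, Finset.univ_inter]
        ring

theorem dotProduct_normAdj_mulVec_le_of_eq_zero_on (hd : d ≠ 0) (hreg : G.IsRegularOfDegree d)
    (hA : EigSystem ((d : ℝ)⁻¹ • G.adjMatrix ℝ) μ φ) (hn : 2 ≤ n)
    (hlam : max |μ ⟨1, by omega⟩| |μ ⟨n - 1, by omega⟩| ≤ lam) (F : Finset V) {x : V → ℝ}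
    (hx : x ⬝ᵥ x = 1) (hxF : ∀ i ∈ F, x i = 0) :
    x ⬝ᵥ ((d : ℝ)⁻¹ • G.adjMatrix ℝ) *ᵥ x ≤ 1 - (1 - lam) * (#F / n) := by
  have : Nonempty V := Fintype.card_pos_iff.mp (by rw [hA.1]; omega)
  have hn0 : (0 : ℝ) < n := by rw [← hA.1]; exact_mod_cast Fintype.card_pos
  have hcard : (#F : ℝ) + #Fᶜ = n := by rw [← hA.1]; exact_mod_cast card_add_card_compl F
  have hsum : (∑ i, x i) ^ 2 ≤ #Fᶜ := by
    rw [← Finset.sum_subset (subset_univ Fᶜ) fun i _ hi => hxF i (by simpa using hi)]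
    calc (∑ i ∈ Fᶜ, x i) ^ 2 ≤ #Fᶜ * ∑ i ∈ Fᶜ, x i ^ 2 := sq_sum_le_card_mul_sum_sq
      _ ≤ #Fᶜ * ∑ i, x i ^ 2 := mul_le_mul_of_nonneg_left
        (Finset.sum_le_sum_of_subset_of_nonneg (subset_univ _) fun i _ _ => sq_nonneg _)
        (Nat.cast_nonneg _)
      _ = #Fᶜ := by rw [show ∑ i, x i ^ 2 = x ⬝ᵥ x by simp [dotProduct, sq], hx, mul_one]
  have hc : 0 ≤ centered x ⬝ᵥ centered x := Finset.sum_nonneg fun i _ => mul_self_nonneg _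
  have hmix := dotProduct_normAdj_mulVec_le hd hreg hA hn hlam x x
  rw [Real.mul_self_sqrt hc, centered_dotProduct_centered, hx, hA.1] at hmix
  have hone : x ⬝ᵥ ((d : ℝ)⁻¹ • G.adjMatrix ℝ) *ᵥ x ≤ 1 := by
    simpa [hx] using (le_abs_self _).trans
      (hA.abs_dotProduct_mulVec_le (x := x) zero_le_one (fun a _ => hA.abs_le_one hreg a) x)
  have hs : (∑ i, x i) ^ 2 / n ≤ 1 - #F / n := by
    rw [div_le_iff₀ hn0, sub_mul, div_mul_cancel₀ _ hn0.ne']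
    linarith
  rcases le_or_gt lam 1 with hl | hl
  · calc x ⬝ᵥ ((d : ℝ)⁻¹ • G.adjMatrix ℝ) *ᵥ x ≤ lam + (1 - lam) * ((∑ i, x i) ^ 2 / n) := by
          rw [← sq] at hmix
          linarith
      _ ≤ lam + (1 - lam) * (1 - #F / n) := by gcongr
      _ = 1 - (1 - lam) * (#F / n) := by ring
  · have : (0 : ℝ) ≤ #F / n := by positivity
    nlinarith

theorem eigenvalue_submatrix_compl_le (hd : d ≠ 0) (hreg : G.IsRegularOfDegree d)
    (hA : EigSystem ((d : ℝ)⁻¹ • G.adjMatrix ℝ) μ φ) (hn : 2 ≤ n)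
    (hlam : max |μ ⟨1, by omega⟩| |μ ⟨n - 1, by omega⟩| ≤ lam) (F : Finset V) {k : ℕ}
    {ν : Fin k → ℝ} {ψ : Fin k → {v : V // v ∉ F} → ℝ}
    (hQ : EigSystem (((d : ℝ)⁻¹ • G.adjMatrix ℝ).submatrix
      (fun v : {v : V // v ∉ F} => (v : V)) (fun v => (v : V))) ν ψ) (a : Fin k) :
    ν a ≤ 1 - (1 - lam) * (#F / n) := by
  set x := (1 : Matrix V V ℝ).submatrix id (Subtype.val : {v : V // v ∉ F} → V) *ᵥ ψ a
  have hx : x ⬝ᵥ x = 1 := by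
    have := dotProduct_submatrix_mulVec (1 : Matrix V V ℝ) Subtype.val (ψ a) (ψ a)
    rwa [submatrix_one _ Subtype.val_injective, one_mulVec, one_mulVec, hQ.dotProduct_self,
      eq_comm] at this
  have hxF : ∀ i ∈ F, x i = 0 := fun i hi =>
    submatrix_val_mulVec_apply_of_not (· ∉ F) (not_not.mpr hi) (ψ a)
  rw [← hQ.dotProduct_mulVec_self a, dotProduct_submatrix_mulVec]
  exact dotProduct_normAdj_mulVec_le_of_eq_zero_on hd hreg hA hn hlam F hx hxF

theorem one_dotProduct_submatrix_compl_mulVec_one (hd : d ≠ 0) (hreg : G.IsRegularOfDegree d)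
    (F : Finset V) :
    1 ⬝ᵥ ((d : ℝ)⁻¹ • G.adjMatrix ℝ).submatrix
        (fun v : {v : V // v ∉ F} => (v : V)) (fun v : {v : V // v ∉ F} => (v : V)) *ᵥ 1
      = #Fᶜ - ∑ v ∈ Fᶜ, ((F.filter (G.Adj v)).card : ℝ) / d := by
  have hcompl : (fun i => if i ∉ F then 1 else 0 : V → ℝ)
      = 1 - fun i => if i ∈ F then 1 else 0 := by
    ext i
    by_cases hi : i ∈ F <;> simp [hi]
  rw [dotProduct_submatrix_mulVec, submatrix_val_mulVec_one]
  nth_rewrite 2 [hcompl]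
  rw [mulVec_sub, normAdj_mulVec_one hd hreg, dotProduct_sub]
  simp only [← Finset.mem_compl, indicator_dotProduct, normAdj_mulVec_indicator_apply,
    Pi.one_apply, sum_const, nsmul_eq_mul, mul_one]

end PrincipalSubmatrix

/-- Let `G` be a connected `d`-regular graph on `n` vertices with
spectral expansion at most `λ`, `F ⊂ V` of size `f < n`, `Q = Â[V∖F]`, and
`α_F = max_{v ∉ F} deg_F(v)/d` the adversarial density.  Then
`max (1 − α_F, 1 − (1+λ) f/n) ≤ λ₁(Q) ≤ 1 − (1−λ) f/n`. -/
theorem stmt_5 (n d f : ℕ) (hd : 0 < d) (hn : 2 ≤ n) (hfn : f < n)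
    (G : SimpleGraph (Fin n)) [DecidableRel G.Adj]
    (hreg : G.IsRegularOfDegree d)
    (F : Finset (Fin n)) (hF : F.card = f) (hne : Fᶜ.Nonempty)
    (α : ℝ) (hα : α = Fᶜ.sup' hne fun v => ((F.filter (G.Adj v)).card : ℝ) / d)
    (μ : Fin n → ℝ) (φ : Fin n → Fin n → ℝ)
    (hA : EigSystem ((d : ℝ)⁻¹ • G.adjMatrix ℝ) μ φ)
    (lam : ℝ) (hlam : max |μ ⟨1, by omega⟩| |μ ⟨n - 1, by omega⟩| ≤ lam)
    (ν : Fin (n - f) → ℝ) (ψ : Fin (n - f) → {v : Fin n // v ∉ F} → ℝ)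
    (hQ : EigSystem (((d : ℝ)⁻¹ • G.adjMatrix ℝ).submatrix
        (fun v : {v : Fin n // v ∉ F} => (v : Fin n)) (fun v => (v : Fin n))) ν ψ) :
    max (1 - α) (1 - (1 + lam) * ((f : ℝ) / n)) ≤ ν ⟨0, by omega⟩ ∧
      ν ⟨0, by omega⟩ ≤ 1 - (1 - lam) * ((f : ℝ) / n) := by
  have hk : 0 < n - f := by omega
  have hcompl : (#Fᶜ : ℝ) = n - f := by
    rw [card_compl, Fintype.card_fin, hF, Nat.cast_sub hfn.le]
  have hpos : (0 : ℝ) < n - f := by rw [← hcompl]; exact_mod_cast hne.card_pos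
  set cut := ∑ v ∈ Fᶜ, ((F.filter (G.Adj v)).card : ℝ) / d
  have hray : (n - f) - cut ≤ ν ⟨0, hk⟩ * (n - f) := by
    have := hQ.dotProduct_mulVec_le hk 1
    rwa [one_dotProduct_submatrix_compl_mulVec_one hd.ne' hreg, one_dotProduct_one, hQ.1,
      Nat.cast_sub hfn.le, hcompl] at this
  have hcut_density : cut ≤ (n - f) * α := by
    rw [← hcompl, ← nsmul_eq_mul]
    exact sum_le_card_nsmul _ _ _ fun v hv =>
      hα ▸ le_sup' (fun v => ((F.filter (G.Adj v)).card : ℝ) / d) hv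
  have hcut_mixing : cut ≤ (1 + lam) * (f * (n - f) / n) := by
    simpa [hF, hcompl] using sum_compl_card_filter_adj_le hd.ne' hreg hA hn hlam F
  refine ⟨max_le ?_ ?_, ?_⟩
  · exact le_of_mul_le_mul_right (by linarith) hpos
  · refine le_of_mul_le_mul_right ?_ hpos
    calc (1 - (1 + lam) * (f / n)) * (n - f) = (n - f) - (1 + lam) * (f * (n - f) / n) := by ring
      _ ≤ ν ⟨0, hk⟩ * (n - f) := by linarith
  · simpa [hF] using eigenvalue_submatrix_compl_le hd.ne' hreg hA hn hlam F hQ ⟨0, hk⟩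
end

section
/- If a gossip protocol satisfies ε-differential privacy for a curious set F of size f in a graph of size n, then the maximum-likelihood estimator ŝ_MLE (MAP with uniform prior on V∖F) satisfies Pr_{s∼Uniform(V∖F)}[ŝ_MLE = s | S_adv^(s) ∈ σ] ≤ exp(ε)/(n−f) for any observation event σ of positive probability. -/
open Finset

/-- Suppose a gossip protocol satisfies `ε`-differential privacy
for a curious set `F` of size `f` in a graph of size `n`: for all sources
`u, v ∈ S = V∖F` (a set of cardinality `n − f`) and every observation event, the
likelihoods satisfy `L v ≤ e^ε · L u`.  Fix an observation event `σ` of positive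
probability and let `sMLE_MLE` maximize the likelihood `L v = Pr[S_adv^(v) ∈ σ]`
(the MAP estimator with uniform prior on `V∖F`).  Then
`Pr_{s∼Uniform(V∖F)}[sMLE_MLE = s | S_adv^(s) ∈ σ] = L sMLE / Σ_v L v ≤ e^ε/(n−f)`. -/
theorem stmt_11 {S : Type} [Fintype S] [Nonempty S] (n f : ℕ) (hfn : f < n)
    (hcard : Fintype.card S = n - f)
    (L : S → ℝ) (hL0 : ∀ v, 0 ≤ L v) (hL1 : ∀ v, L v ≤ 1)
    (ε : ℝ) (hdp : ∀ u v : S, L v ≤ Real.exp ε * L u)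
    (hpos : 0 < ∑ v, L v)
    (sMLE : S) (hmle : ∀ v, L v ≤ L sMLE) :
    L sMLE / (∑ v, L v) ≤ Real.exp ε / ((n : ℝ) - f) := by
  have hc : ((n : ℝ) - f) = (Fintype.card S : ℝ) := by
    rw [hcard]; push_cast [Nat.cast_sub hfn.le]; ring
  have hcpos : (0:ℝ) < (n : ℝ) - f := by
    rw [hc]; exact_mod_cast Fintype.card_pos
  rw [div_le_div_iff₀ hpos hcpos]
  have key : (Fintype.card S : ℝ) * L sMLE ≤ Real.exp ε * ∑ v, L v := by
    calc (Fintype.card S : ℝ) * L sMLE = ∑ _v : S, L sMLE := by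
          rw [Finset.sum_const, card_univ, nsmul_eq_mul]
      _ ≤ ∑ v : S, Real.exp ε * L v := Finset.sum_le_sum fun v _ => hdp v sMLE
      _ = Real.exp ε * ∑ v, L v := by rw [Finset.mul_sum]
  rw [hc]; linarith
end

section
/- For any gossip protocol on any undirected connected graph of size n with f > 1 curious nodes: if the protocol satisfies ε-differential privacy against the average-case (or worst-case) adversary, then ε ≥ ln(f − 1). -/
/-!
Let `w v x` be the probability that, with source `v`, the first round in which the gossip
reaches a node other than `v` reaches `x` (the least such node, if there are several). For a
curious set `F` and `v ∉ F`, with probability at least `∑ x ∈ F, w v x` the adversary's first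
observation is a batch of messages sent by `v`; these events are disjoint in `v`. So if `ε`-DP
holds for `F`, then for every `u ∉ F`
  `∑ v ∉ F, v ≠ u, ∑ x ∈ F, w v x ≤ exp ε * (1 - ∑ x ∈ F, w u x)`,
and summing over `u` shows that the mass `∑ v ∉ F, ∑ x ∈ F, w v x` entering `F` is at most
`(f - 1) (n - f) / (n - 2)` when `exp ε < f - 1`. But since `∑ x ≠ v, w v x = 1`, double counting
shows that this mass is `f (n - f) / (n - 1)` on average over the `f`-subsets `F`, which cannot
happen if the bound holds on all but a `1/n` fraction of them.
-/

open MeasureTheory Finset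

namespace GossipDP

/-- Round-by-round record of communications: `e t` is the set of communications
`(sender, receiver)` taking place in round `t`. -/
abbrev Exec (n : ℕ) := ℕ → Finset (Fin n × Fin n)

instance (n : ℕ) : MeasurableSpace (Finset (Fin n × Fin n)) := ⊤

/-- Active sets of an execution `e` started at the source `s`: initially only the
source is active, and the nodes active in round `t+1` are exactly those that
received a message in round `t`. -/
def active {n : ℕ} (s : Fin n) (e : Exec n) : ℕ → Finset (Fin n)
  | 0 => {s}
  | t + 1 => (e t).image Prod.snd

/-- A valid execution of a gossip protocol on `G` from source `s`: in every round
all communications are sent by active nodes, along edges of `G` (or fictitious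
self-messages allowing a node to stay active). -/
def IsValidExec {n : ℕ} (G : SimpleGraph (Fin n)) (s : Fin n) (e : Exec n) : Prop :=
  ∀ t, ∀ c ∈ e t, c.1 ∈ active s e t ∧ (c.1 = c.2 ∨ G.Adj c.1 c.2)

/-- The adversary's observation for the curious set `F`: the subsequence of
communications visible to `F` (those with an endpoint in `F`), shifted so that it
starts at the first round `t_adv` in which a curious node takes part in a
communication (the adversary does not know the global starting time). -/
noncomputable def obs {n : ℕ} (F : Finset (Fin n)) (e : Exec n) : Exec n := by
  classical
  exact fun t =>
    if h : ∃ k, ((e k).filter fun c => c.1 ∈ F ∨ c.2 ∈ F) ≠ ∅ then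
      (e (Nat.find h + t)).filter fun c => c.1 ∈ F ∨ c.2 ∈ F
    else ∅

/-- `ε`-differential privacy of the protocol `P` (a family of execution
distributions, one for each source) for the curious set `F`: for any two
non-curious sources `u, v` and any measurable event `A` of adversarial
observations, `Pr[obs^(v) ∈ A] ≤ e^ε · Pr[obs^(u) ∈ A]`.  This says exactly
`D_∞(S_adv^(v) ‖ S_adv^(u)) ≤ ε` for all `u, v ∉ F`. -/
def DPFor {n : ℕ} (P : Fin n → Measure (Exec n)) (F : Finset (Fin n)) (ε : ℝ) : Prop :=
  ∀ u v : Fin n, u ∉ F → v ∉ F →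
    ∀ A : Set (Exec n), MeasurableSet A →
      P v (obs F ⁻¹' A) ≤ ENNReal.ofReal (Real.exp ε) * P u (obs F ⁻¹' A)

section Averaging

variable {α : Type*} [Fintype α] [DecidableEq α]

theorem card_filter_notMem_mem_powersetCard {v x : α} (hxv : x ≠ v) {f : ℕ} (hf : 0 < f) :
    #{F ∈ powersetCard f univ | v ∉ F ∧ x ∈ F} = (Fintype.card α - 2).choose (f - 1) := by
  have hcard : #((univ.erase v).erase x) = Fintype.card α - 2 := by
    rw [card_erase_of_mem (by simp [hxv]), card_erase_of_mem (mem_univ v), card_univ]; omega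
  rw [← hcard, ← card_powersetCard]
  refine card_bij' (fun F _ => F.erase x) (fun S _ => insert x S) ?_ ?_ ?_ ?_
  · intro F hF
    simp only [mem_filter, mem_powersetCard] at hF ⊢
    refine ⟨fun y hy => ?_, by rw [card_erase_of_mem hF.2.2, hF.1.2]⟩
    grind
  · intro S hS
    simp only [mem_filter, mem_powersetCard] at hS ⊢
    have hxS : x ∉ S := fun h => by simpa using hS.1 h
    refine ⟨⟨subset_univ _, by rw [card_insert_of_notMem hxS, hS.2]; omega⟩, ?_,
      mem_insert_self x S⟩
    intro h
    grind
  · intro F hF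
    exact insert_erase (mem_filter.mp hF).2.2
  · intro S hS
    exact erase_insert fun h => by simpa using (mem_powersetCard.mp hS).1 h

theorem sum_powersetCard_sum_compl_sum (w : α → α → ℝ) {f : ℕ} (hf : 0 < f) :
    ∑ F ∈ powersetCard f univ, ∑ v ∈ Fᶜ, ∑ x ∈ F, w v x =
      (Fintype.card α - 2).choose (f - 1) * ∑ v, ∑ x ∈ univ.erase v, w v x := by
  calc ∑ F ∈ powersetCard f univ, ∑ v ∈ Fᶜ, ∑ x ∈ F, w v x
      = ∑ F ∈ powersetCard f univ, ∑ p ∈ Fᶜ ×ˢ F, w p.1 p.2 := by simp_rw [sum_product]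
    _ = ∑ p : α × α, ∑ F ∈ powersetCard f univ with p.1 ∉ F ∧ p.2 ∈ F, w p.1 p.2 :=
        sum_comm' fun F p => by simp [and_comm]
    _ = ∑ v, ∑ x, #{F ∈ powersetCard f univ | v ∉ F ∧ x ∈ F} * w v x := by
        rw [← univ_product_univ, sum_product]; simp [sum_const]
    _ = ∑ v, ∑ x ∈ univ.erase v, (Fintype.card α - 2).choose (f - 1) * w v x := by
        refine sum_congr rfl fun v _ => ?_
        rw [← sum_erase univ (a := v) (by simp)]
        exact sum_congr rfl fun x hx => by
          rw [card_filter_notMem_mem_powersetCard (ne_of_mem_erase hx) hf]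
    _ = _ := by simp_rw [mul_sum]

theorem sum_sum_erase_eq_card_sub_one_mul {β R : Type*} [DecidableEq β] [CommRing R]
    (s : Finset β) (g : β → R) :
    ∑ u ∈ s, ∑ v ∈ s.erase u, g v = (#s - 1) * ∑ v ∈ s, g v := by
  rw [sum_congr rfl fun u hu => sum_erase_eq_sub hu, sum_sub_distrib, sum_const, nsmul_eq_mul]
  ring

theorem card_sub_one_add_mul_sum_le {β : Type*} [DecidableEq β] (s : Finset β) (g : β → ℝ)
    {c : ℝ} (h : ∀ u ∈ s, ∑ v ∈ s.erase u, g v ≤ c * (1 - g u)) :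
    (#s - 1 + c) * ∑ v ∈ s, g v ≤ c * #s := by
  have := sum_le_sum h
  rw [sum_sum_erase_eq_card_sub_one_mul, ← mul_sum, sum_sub_distrib, sum_const, nsmul_eq_mul,
    mul_one] at this
  linarith

theorem choose_mul_mul_sub (n k : ℕ) :
    (n + 2).choose (k + 1) * (k + 1) * (n + 1 - k) = (n + 2) * (n + 1) * n.choose k := by
  have h₁ := Nat.choose_mul_succ_eq (n + 1) (k + 1)
  have h₂ := Nat.add_one_mul_choose_eq n k
  rw [show n + 1 + 1 - (k + 1) = n + 1 - k by omega] at h₁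
  calc (n + 2).choose (k + 1) * (k + 1) * (n + 1 - k)
      = (n + 1).choose (k + 1) * (k + 1) * (n + 2) := by rw [mul_right_comm, ← h₁]; ring
    _ = (n + 2) * (n + 1) * n.choose k := by rw [← h₂]; ring

theorem sum_le_one_of_notMem {w : α → α → ℝ} (hw0 : ∀ v x, 0 ≤ w v x)
    (hw1 : ∀ v, ∑ x ∈ univ.erase v, w v x = 1) {F : Finset α} {v : α} (hv : v ∉ F) :
    ∑ x ∈ F, w v x ≤ 1 :=
  hw1 v ▸ sum_le_sum_of_subset_of_nonneg
    (fun y hy => mem_erase.2 ⟨by rintro rfl; exact hv hy, mem_univ y⟩) fun _ _ _ => hw0 _ _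

theorem sum_compl_sum_le_card_compl {w : α → α → ℝ} (hw0 : ∀ v x, 0 ≤ w v x)
    (hw1 : ∀ v, ∑ x ∈ univ.erase v, w v x = 1) (F : Finset α) :
    ∑ v ∈ Fᶜ, ∑ x ∈ F, w v x ≤ #Fᶜ := by
  simpa using sum_le_card_nsmul Fᶜ _ 1 fun v hv => sum_le_one_of_notMem hw0 hw1 (mem_compl.1 hv)

theorem card_sub_two_mul_sum_compl_sum_le {w : α → α → ℝ} (hw0 : ∀ v x, 0 ≤ w v x)
    (hw1 : ∀ v, ∑ x ∈ univ.erase v, w v x = 1) (F : Finset α) {c : ℝ} (hc : c ≤ #F - 1)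
    (hbound : ∀ u ∈ Fᶜ, ∑ v ∈ Fᶜ.erase u, ∑ x ∈ F, w v x ≤ c * (1 - ∑ x ∈ F, w u x)) :
    (Fintype.card α - 2) * ∑ v ∈ Fᶜ, ∑ x ∈ F, w v x ≤ (#F - 1) * #Fᶜ := by
  have hT := sum_compl_sum_le_card_compl hw0 hw1 F
  have := card_sub_one_add_mul_sum_le Fᶜ _ hbound
  have hcard : (Fintype.card α : ℝ) = #F + #Fᶜ := by exact_mod_cast (card_add_card_compl F).symm
  nlinarith [mul_le_mul_of_nonneg_right hc (sub_nonneg.2 hT)]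

theorem card_sub_one_mul_sum_powersetCard_sum_compl_sum {w : α → α → ℝ}
    (hw1 : ∀ v, ∑ x ∈ univ.erase v, w v x = 1) {f : ℕ} (hf : 0 < f) (hα : 2 ≤ Fintype.card α) :
    (Fintype.card α - 1) * ∑ F ∈ powersetCard f univ, ∑ v ∈ Fᶜ, ∑ x ∈ F, w v x
      = #(powersetCard f (univ : Finset α)) * f * (Fintype.card α - f) := by
  obtain ⟨M, hM⟩ : ∃ M, Fintype.card α = M + 2 := ⟨Fintype.card α - 2, by omega⟩
  obtain ⟨k, rfl⟩ : ∃ k, f = k + 1 := ⟨f - 1, by omega⟩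
  rw [sum_powersetCard_sum_compl_sum w hf, card_powersetCard, card_univ]
  simp only [hw1, sum_const, card_univ, hM, add_tsub_cancel_right, Nat.smul_one_eq_cast]
  rcases le_or_gt k (M + 1) with hk | hk
  · have := choose_mul_mul_sub M k
    rw [← Nat.cast_inj (R := ℝ)] at this
    push_cast [Nat.cast_sub hk] at this ⊢
    linear_combination -this
  · simp [Nat.choose_eq_zero_of_lt (by omega : M < k),
      Nat.choose_eq_zero_of_lt (by omega : M + 2 < k + 1)]

theorem natCast_sub_one_le_of_forall_sum_compl_erase_le {f : ℕ} (hf : 1 < f)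
    (hfn : f + 1 < Fintype.card α) {w : α → α → ℝ} (hw0 : ∀ v x, 0 ≤ w v x)
    (hw1 : ∀ v, ∑ x ∈ univ.erase v, w v x = 1) (D : Finset α → Prop) [DecidablePred D]
    (hD : (1 - 1 / (Fintype.card α : ℝ)) * #(powersetCard f (univ : Finset α))
      ≤ #{F ∈ powersetCard f (univ : Finset α) | D F})
    {c : ℝ} (hbound : ∀ F, D F → ∀ u ∈ Fᶜ,
      ∑ v ∈ Fᶜ.erase u, ∑ x ∈ F, w v x ≤ c * (1 - ∑ x ∈ F, w u x)) :
    (f : ℝ) - 1 ≤ c := by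
  by_contra! hcf
  have hf' : (1 : ℝ) < f := by exact_mod_cast hf
  have hfm : (f : ℝ) + 1 < Fintype.card α := by exact_mod_cast hfn
  set A := powersetCard f (univ : Finset α)
  set T : Finset α → ℝ := fun F => ∑ v ∈ Fᶜ, ∑ x ∈ F, w v x
  set m : ℝ := (Fintype.card α : ℝ)
  set d : ℝ := (#{F ∈ A | ¬ D F} : ℝ)
  have hcompl (F : Finset α) (hF : F ∈ A) : (#Fᶜ : ℝ) = m - f := by
    rw [card_compl, Nat.cast_sub (card_le_univ F), (mem_powersetCard.1 hF).2]
  have hT_good (F : Finset α) (hF : F ∈ A) (hDF : D F) : (m - 2) * T F ≤ (f - 1) * (m - f) := by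
    have := card_sub_two_mul_sum_compl_sum_le hw0 hw1 F (c := c) (by
      rw [(mem_powersetCard.1 hF).2]; exact hcf.le) (hbound F hDF)
    rwa [hcompl F hF, (mem_powersetCard.1 hF).2] at this
  have hT_bad (F : Finset α) (hF : F ∈ A) : (m - 2) * T F ≤ (m - 2) * (m - f) :=
    mul_le_mul_of_nonneg_left ((sum_compl_sum_le_card_compl hw0 hw1 F).trans_eq (hcompl F hF))
      (by linarith)
  have htotal : (m - 1) * ∑ F ∈ A, T F = #A * f * (m - f) :=
    card_sub_one_mul_sum_powersetCard_sum_compl_sum hw1 (by omega) (by omega)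
  have hgood_card : (#{F ∈ A | D F} : ℝ) = #A - d := by
    rw [← card_filter_add_card_filter_not (s := A) D]; push_cast; ring
  have hd : m * d ≤ #A := by
    have hm0 : 0 < m := by linarith
    rw [hgood_card, one_sub_div hm0.ne', div_mul_eq_mul_div, div_le_iff₀ hm0] at hD
    linarith
  have hsplit : (m - 2) * ∑ F ∈ A, T F
      ≤ (#A - d) * ((f - 1) * (m - f)) + d * ((m - 2) * (m - f)) := by
    rw [mul_sum, ← sum_filter_add_sum_filter_not A D, ← hgood_card]
    refine add_le_add ?_ ?_ <;> refine (sum_le_card_nsmul _ _ _ fun F hF => ?_).trans_eq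
      (nsmul_eq_mul _ _)
    · exact hT_good F (mem_filter.1 hF).1 (mem_filter.1 hF).2
    · exact hT_bad F (mem_filter.1 hF).1
  -- Against the exact average `htotal`, the sets violating the bound would have to make up
  -- more than a `1 / (m - 1)` fraction of all `f`-sets.
  have hkey : (m - f) * (m - f - 1) * (#A - (m - 1) * d) ≤ 0 := by
    have := mul_le_mul_of_nonneg_left hsplit (by linarith : (0 : ℝ) ≤ m - 1)
    linear_combination this - (m - 2) * htotal
  have hA : (1 : ℝ) ≤ #A := by
    exact_mod_cast card_pos.2 (powersetCard_nonempty.2 (by simp; omega))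
  have := nonpos_of_mul_nonpos_right hkey (by apply mul_pos <;> linarith)
  nlinarith

end Averaging

section Events

variable {n : ℕ}

instance : DiscreteMeasurableSpace (Finset (Fin n × Fin n)) :=
  ⟨fun _ => MeasurableSpace.measurableSet_top⟩

def newReceivers (v : Fin n) (S : Finset (Fin n × Fin n)) : Finset (Fin n) :=
  (S.image Prod.snd).erase v

def FirstContact (v x : Fin n) : Set (Exec n) :=
  {e | ∃ T, (∀ k < T, newReceivers v (e k) = ∅) ∧ (newReceivers v (e T)).min = x}

def visible (F : Finset (Fin n)) (S : Finset (Fin n × Fin n)) : Finset (Fin n × Fin n) :=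
  S.filter fun c => c.1 ∈ F ∨ c.2 ∈ F

def SentBy (v : Fin n) : Set (Finset (Fin n × Fin n)) :=
  {S | S.Nonempty ∧ ∀ c ∈ S, c.1 = v}

def FirstSeen (F : Finset (Fin n)) (v : Fin n) : Set (Exec n) :=
  obs F ⁻¹' {o | o 0 ∈ SentBy v}

theorem measurableSet_firstContact (v x : Fin n) : MeasurableSet (FirstContact v x) :=
  measurableSet_setOfPred.2 (by fun_prop)

theorem obs_zero_mem_iff {F : Finset (Fin n)} {Z : Set (Finset (Fin n × Fin n))} (hZ : ∅ ∉ Z)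
    (e : Exec n) :
    obs F e 0 ∈ Z ↔ ∃ T, (∀ k < T, visible F (e k) = ∅) ∧ visible F (e T) ∈ Z := by
  unfold obs
  split_ifs with h
  · simp only [add_zero]
    constructor
    · exact fun hz => ⟨_, fun k hk => not_not.1 (Nat.find_min h hk), hz⟩
    · rintro ⟨T, hpre, hT⟩
      have hfind : Nat.find h = T := (Nat.find_eq_iff h).2
        ⟨fun h0 => hZ (h0 ▸ hT), fun k hk => not_not.2 (hpre k hk)⟩
      rwa [hfind]
  · push Not at h
    simp only [visible, h]
    exact ⟨fun h0 => (hZ h0).elim, fun ⟨_, _, h0⟩ => (hZ h0).elim⟩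

theorem empty_notMem_sentBy (v : Fin n) : ∅ ∉ SentBy v :=
  fun h => Finset.not_nonempty_empty h.1

theorem measurableSet_firstSeen (F : Finset (Fin n)) (v : Fin n) :
    MeasurableSet (FirstSeen F v) := by
  simp_rw [FirstSeen, Set.preimage_ofPred_eq, obs_zero_mem_iff (empty_notMem_sentBy v)]
  exact measurableSet_setOfPred.2 (by fun_prop)

theorem newReceivers_eq_empty {v : Fin n} {S : Finset (Fin n × Fin n)} :
    newReceivers v S = ∅ ↔ ∀ c ∈ S, c.2 = v := by
  simp only [newReceivers, eq_empty_iff_forall_notMem, mem_erase, mem_image]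
  grind

theorem pairwise_disjoint_firstContact (v : Fin n) :
    Pairwise (Function.onFun Disjoint (FirstContact v)) := by
  intro x y hxy
  refine Set.disjoint_left.2 fun e ⟨T, hquiet, hx⟩ ⟨T', hquiet', hy⟩ => hxy ?_
  obtain rfl : T = T' := by
    by_contra hne
    rcases lt_or_gt_of_ne hne with h | h
    · simp [hquiet' T h] at hx
    · simp [hquiet T' h] at hy
  exact WithTop.coe_injective (hx.symm.trans hy)

theorem pairwise_disjoint_firstSeen (F : Finset (Fin n)) :
    Pairwise (Function.onFun Disjoint (FirstSeen F)) :=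
  fun _ _ hvv' => Set.disjoint_left.2 fun _ ⟨⟨c, hc⟩, hv⟩ ⟨_, hv'⟩ =>
    hvv' ((hv c hc).symm.trans (hv' c hc))

theorem active_subset_singleton {v : Fin n} {e : Exec n} {T : ℕ}
    (hquiet : ∀ k < T, newReceivers v (e k) = ∅) {t : ℕ} (ht : t ≤ T) :
    active v e t ⊆ {v} := by
  cases t with
  | zero => exact subset_rfl
  | succ s =>
    intro y hy
    obtain ⟨c, hc, rfl⟩ := mem_image.1 hy
    exact mem_singleton.2 (newReceivers_eq_empty.1 (hquiet s ht) c hc)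

theorem firstContact_inter_subset_firstSeen (G : SimpleGraph (Fin n)) {F : Finset (Fin n)}
    {v x : Fin n} (hv : v ∉ F) (hx : x ∈ F) :
    FirstContact v x ∩ {e | IsValidExec G v e} ⊆ FirstSeen F v := by
  rintro e ⟨⟨T, hquiet, hmin⟩, hvalid⟩
  have hsender (t : ℕ) (ht : t ≤ T) (c) (hc : c ∈ e t) : c.1 = v :=
    mem_singleton.1 (active_subset_singleton hquiet ht (hvalid t c hc).1)
  refine (obs_zero_mem_iff (empty_notMem_sentBy v) e).2 ⟨T, fun k hk => ?_, ?_, ?_⟩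
  · refine filter_eq_empty_iff.2 fun c hc => ?_
    rw [hsender k hk.le c hc, newReceivers_eq_empty.1 (hquiet k hk) c hc]
    tauto
  · obtain ⟨c, hc, hcx⟩ : ∃ c ∈ e T, c.2 = x := by
      simpa [newReceivers] using (mem_erase.1 (mem_of_min hmin)).2
    exact ⟨c, mem_filter.2 ⟨hc, Or.inr (hcx ▸ hx)⟩⟩
  · exact fun c hc => hsender T le_rfl c (mem_filter.1 hc).1

theorem setOf_disseminates_subset_iUnion_firstContact (hn : 1 < n) (v : Fin n) :
    {e : Exec n | ∀ w, ∃ t, w ∈ active v e t} ⊆ ⋃ x ∈ univ.erase v, FirstContact v x := by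
  intro e he
  obtain ⟨w, hw⟩ := Fintype.exists_ne_of_one_lt_card (by simpa using hn) v
  have hex : ∃ T, (newReceivers v (e T)).Nonempty := by
    obtain ⟨t, ht⟩ := he w
    cases t with
    | zero => exact absurd (mem_singleton.1 ht) hw
    | succ s => exact ⟨s, w, mem_erase.2 ⟨hw, ht⟩⟩
  obtain ⟨x, hx⟩ := min_of_nonempty (Nat.find_spec hex)
  refine Set.mem_biUnion (mem_erase.2 ⟨(mem_erase.1 (mem_of_min hx)).1, mem_univ x⟩)
    ⟨Nat.find hex, fun k hk => not_nonempty_iff_eq_empty.1 (Nat.find_min hex hk), hx⟩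

end Events

section Measures

variable {n : ℕ}

theorem sum_measureReal_firstContact (hn : 1 < n) {v : Fin n} (μ : Measure (Exec n))
    [IsProbabilityMeasure μ] (hdiss : μ {e | ∀ w, ∃ t, w ∈ active v e t} = 1) :
    ∑ x ∈ univ.erase v, μ.real (FirstContact v x) = 1 := by
  rw [← measureReal_biUnion_finset (fun _ _ _ _ hxy => pairwise_disjoint_firstContact v hxy)
    fun x _ => measurableSet_firstContact v x]
  refine le_antisymm measureReal_le_one ?_
  calc 1 = μ.real {e | ∀ w, ∃ t, w ∈ active v e t} := by simp [measureReal_def, hdiss]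
    _ ≤ _ := measureReal_mono (setOf_disseminates_subset_iUnion_firstContact hn v)
      (measure_ne_top _ _)

theorem sum_measureReal_firstContact_le_firstSeen (G : SimpleGraph (Fin n)) (μ : Measure (Exec n))
    [IsFiniteMeasure μ] {F : Finset (Fin n)} {v : Fin n} (hv : v ∉ F)
    (hvalid : μ {e | ¬ IsValidExec G v e} = 0) :
    ∑ x ∈ F, μ.real (FirstContact v x) ≤ μ.real (FirstSeen F v) := by
  rw [← measureReal_biUnion_finset (fun _ _ _ _ hxy => pairwise_disjoint_firstContact v hxy)
    fun x _ => measurableSet_firstContact v x, measureReal_def,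
    ← measure_inter_conull (t := {e | IsValidExec G v e}) (by rwa [Set.compl_ofPred]),
    ← measureReal_def, Set.iUnion₂_inter]
  exact measureReal_mono
    (Set.iUnion₂_subset fun x hx => firstContact_inter_subset_firstSeen G hv hx)

theorem sum_measureReal_firstSeen_le_one (μ : Measure (Exec n)) [IsProbabilityMeasure μ]
    (F s : Finset (Fin n)) : ∑ v ∈ s, μ.real (FirstSeen F v) ≤ 1 := by
  rw [← measureReal_biUnion_finset (fun _ _ _ _ hvv' => pairwise_disjoint_firstSeen F hvv')
    fun v _ => measurableSet_firstSeen F v]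
  exact measureReal_le_one

theorem DPFor.measureReal_preimage_obs_le {P : Fin n → Measure (Exec n)} {F : Finset (Fin n)}
    {ε : ℝ} (h : DPFor P F ε) {u v : Fin n} (hu : u ∉ F) (hv : v ∉ F) [IsFiniteMeasure (P u)]
    {A : Set (Exec n)} (hA : MeasurableSet A) :
    (P v).real (obs F ⁻¹' A) ≤ Real.exp ε * (P u).real (obs F ⁻¹' A) := by
  have := ENNReal.toReal_mono (by finiteness) (h u v hu hv A hA)
  rwa [ENNReal.toReal_mul, ENNReal.toReal_ofReal (Real.exp_nonneg ε)] at this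

theorem DPFor.sum_sum_measureReal_firstContact_le {G : SimpleGraph (Fin n)}
    {P : Fin n → Measure (Exec n)} (hprob : ∀ s, IsProbabilityMeasure (P s))
    (hvalid : ∀ s, P s {e | ¬ IsValidExec G s e} = 0) {F : Finset (Fin n)} {ε : ℝ}
    (h : DPFor P F ε) {u : Fin n} (hu : u ∈ Fᶜ) :
    ∑ v ∈ Fᶜ.erase u, ∑ x ∈ F, (P v).real (FirstContact v x)
      ≤ Real.exp ε * (1 - ∑ x ∈ F, (P u).real (FirstContact u x)) := by
  have hA (v : Fin n) : MeasurableSet {o : Exec n | o 0 ∈ SentBy v} :=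
    measurableSet_setOfPred.2 (by fun_prop)
  have hu' := mem_compl.1 hu
  calc ∑ v ∈ Fᶜ.erase u, ∑ x ∈ F, (P v).real (FirstContact v x)
      ≤ ∑ v ∈ Fᶜ.erase u, Real.exp ε * (P u).real (FirstSeen F v) := by
        refine sum_le_sum fun v hv => ?_
        have hvF := mem_compl.1 (mem_of_mem_erase hv)
        exact (sum_measureReal_firstContact_le_firstSeen G _ hvF (hvalid v)).trans
          (h.measureReal_preimage_obs_le hu' hvF (hA v))
    _ = Real.exp ε * (∑ v ∈ Fᶜ, (P u).real (FirstSeen F v) - (P u).real (FirstSeen F u)) := by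
        rw [← mul_sum, sum_erase_eq_sub hu]
    _ ≤ Real.exp ε * (1 - ∑ x ∈ F, (P u).real (FirstContact u x)) := by
        gcongr
        · exact sum_measureReal_firstSeen_le_one _ F _
        · exact sum_measureReal_firstContact_le_firstSeen G _ hu' (hvalid u)

end Measures

open Classical in
theorem stmt_12_general {n f : ℕ} (hf : 1 < f) (hfn : f < n - 1)
    (G : SimpleGraph (Fin n))
    (P : Fin n → Measure (Exec n)) (hprob : ∀ s, IsProbabilityMeasure (P s))
    (hvalid : ∀ s, P s {e | ¬ IsValidExec G s e} = 0)
    (hdiss : ∀ s, P s {e | ∀ v : Fin n, ∃ t, v ∈ active s e t} = 1)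
    (ε : ℝ)
    (hdp : (1 - 1 / (n : ℝ)) * (((Finset.univ : Finset (Fin n)).powersetCard f).card : ℝ)
        ≤ ((((Finset.univ : Finset (Fin n)).powersetCard f).filter
            fun F => DPFor P F ε).card : ℝ)) :
    Real.log ((f : ℝ) - 1) ≤ ε := by
  have := hprob
  rw [Real.log_le_iff_le_exp (by linarith [(by exact_mod_cast hf : (1 : ℝ) < f)])]
  refine natCast_sub_one_le_of_forall_sum_compl_erase_le hf (by simp; omega)
    (w := fun v x => (P v).real (FirstContact v x)) (fun _ _ => measureReal_nonneg)
    (fun v => sum_measureReal_firstContact (by omega) (P v) (hdiss v)) (fun F => DPFor P F ε)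
    (by rwa [Fintype.card_fin]) fun F hF u hu =>
      hF.sum_sum_measureReal_firstContact_le hprob hvalid hu

open Classical in
/-- For any gossip protocol `P` on any undirected connected graph
of size `n` with `1 < f < n − 1` curious nodes: if `P` satisfies `ε`-differential
privacy against the average-case adversary — i.e. for at least a `1 − 1/n`
fraction of the `f`-subsets `F` of the vertices, `ε`-DP holds for `F` (which in
particular is implied by worst-case `ε`-DP, where it holds for every such `F`) —
then `ε ≥ ln (f − 1)`.  The protocol is assumed valid (communications follow the
graph) and disseminating (with probability one every node eventually becomes
active). -/
theorem stmt_12 {n f : ℕ} (hf : 1 < f) (hfn : f < n - 1)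
    (G : SimpleGraph (Fin n)) (hconn : G.Connected)
    (P : Fin n → Measure (Exec n)) (hprob : ∀ s, IsProbabilityMeasure (P s))
    (hvalid : ∀ s, P s {e | ¬ IsValidExec G s e} = 0)
    (hdiss : ∀ s, P s {e | ∀ v : Fin n, ∃ t, v ∈ active s e t} = 1)
    (ε : ℝ)
    (hdp : (1 - 1 / (n : ℝ)) * (((Finset.univ : Finset (Fin n)).powersetCard f).card : ℝ)
        ≤ ((((Finset.univ : Finset (Fin n)).powersetCard f).filter
            fun F => DPFor P F ε).card : ℝ)) :
    Real.log ((f : ℝ) - 1) ≤ ε :=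
  stmt_12_general hf hfn G P hprob hvalid hdiss ε hdp

end GossipDP
end

section
/- Let G be an undirected connected graph and f ≥ κ(G) (the vertex connectivity). Then no gossip protocol on G can satisfy ε-differential privacy with finite ε against the worst-case adversary with f curious nodes, provided f < n − 1. -/
/-!
Let the curious set `F` contain a vertex cut `K` and avoid two vertices `u`, `v` lying in
different components of `G - K`. Until a message reaches `F`, the information started at a
source only travels inside its own component, so every sender in the first round the adversary
observes lies in the component of the source. The event "some first observed sender lies in the
component of `v`" therefore has probability `0` from `u`, but probability `1` from `v`, because
dissemination forces a message to reach `F`. No factor `exp ε` bounds `1` by `0`.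
-/

open MeasureTheory Finset

namespace GossipDP

theorem _root_.SimpleGraph.exists_connectedComponentMk_ne {V : Type*} [Nonempty V]
    {H : SimpleGraph V} (h : ¬ H.Connected) :
    ∃ a b, H.connectedComponentMk a ≠ H.connectedComponentMk b := by
  by_contra! hall
  exact h ⟨fun a b => SimpleGraph.ConnectedComponent.exact (hall a b)⟩

section InducedComponents

variable {V : Type*} {G : SimpleGraph V} {s : Set V}

theorem _root_.SimpleGraph.ConnectedComponent.mem_image_supp_of_adj
    (C : (G.induce s).ConnectedComponent) {x y : V} (hx : x ∈ Subtype.val '' C.supp)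
    (hxy : G.Adj x y) (hy : y ∈ s) : y ∈ Subtype.val '' C.supp := by
  obtain ⟨x, hxC, rfl⟩ := hx
  refine ⟨⟨y, hy⟩, ?_, rfl⟩
  rw [SimpleGraph.ConnectedComponent.mem_supp_iff] at hxC ⊢
  rw [← hxC]
  exact (SimpleGraph.ConnectedComponent.connectedComponentMk_eq_of_adj
    (G := G.induce s) (v := x) (w := ⟨y, hy⟩) hxy).symm

theorem _root_.SimpleGraph.ConnectedComponent.disjoint_image_supp
    {C C' : (G.induce s).ConnectedComponent} (h : C ≠ C') :
    Disjoint (Subtype.val '' C.supp) (Subtype.val '' C'.supp) :=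
  (Set.disjoint_image_iff Subtype.val_injective).mpr
    (SimpleGraph.pairwise_disjoint_supp_connectedComponent _ h)

end InducedComponents

theorem exists_superset_card_eq_notMem_pair {α : Type*} [Fintype α] [DecidableEq α]
    {K : Finset α} {f : ℕ} {u v : α} (hKf : K.card ≤ f) (hf : f + 2 ≤ Fintype.card α)
    (hu : u ∉ K) (hv : v ∉ K) (huv : u ≠ v) :
    ∃ F : Finset α, K ⊆ F ∧ F.card = f ∧ u ∉ F ∧ v ∉ F := by
  have hK : K ⊆ univ \ {u, v} := by
    intro x hx
    simp only [mem_sdiff, mem_univ, mem_insert, mem_singleton, true_and]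
    rintro (rfl | rfl) <;> contradiction
  have hcard : (univ \ {u, v} : Finset α).card = Fintype.card α - 2 := by
    rw [card_sdiff_of_subset (subset_univ _), card_univ, card_pair huv]
  obtain ⟨F, hKF, hF, hFcard⟩ := exists_subsuperset_card_eq hK hKf (by omega)
  exact ⟨F, hKF, hFcard, fun h => by simpa using hF h, fun h => by simpa using hF h⟩

def IsClosedOutside {n : ℕ} (G : SimpleGraph (Fin n)) (F : Finset (Fin n)) (S : Set (Fin n)) :
    Prop :=
  ∀ x ∈ S, ∀ y, G.Adj x y → y ∉ F → y ∈ S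

section Gossip

variable {n : ℕ} {G : SimpleGraph (Fin n)} {F : Finset (Fin n)} {S : Set (Fin n)}
  {s : Fin n} {e : Exec n}

theorem active_subset_of_forall_lt (he : IsValidExec G s e) (hs : s ∈ S)
    (hS : IsClosedOutside G F S) :
    ∀ t, (∀ k < t, ∀ c ∈ e k, c.2 ∉ F) → ↑(active s e t) ⊆ S
  | 0, _ => by simpa [active] using hs
  | t + 1, hbefore => by
    rintro _ hw
    obtain ⟨c, hc, rfl⟩ := mem_image.mp hw
    have hsender : c.1 ∈ S :=
      active_subset_of_forall_lt he hs hS t (fun k hk => hbefore k (by omega)) (he t c hc).1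
    rcases (he t c hc).2 with hself | hadj
    · exact hself ▸ hsender
    · exact hS c.1 hsender c.2 hadj (hbefore t (by omega) c hc)

theorem exists_round_of_mem_obs_zero {c : Fin n × Fin n} (hc : c ∈ obs F e 0) :
    ∃ t, c ∈ e t ∧ ∀ k < t, ∀ c' ∈ e k, c'.2 ∉ F := by
  classical
  unfold obs at hc
  split_ifs at hc with h
  · refine ⟨Nat.find h, (mem_filter.mp hc).1, fun k hk c' hc' hc'F => Nat.find_min h hk ?_⟩
    exact ne_empty_of_mem (mem_filter.mpr ⟨hc', Or.inr hc'F⟩)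
  · exact absurd hc (notMem_empty c)

theorem sender_mem_of_mem_obs_zero (he : IsValidExec G s e) (hs : s ∈ S)
    (hS : IsClosedOutside G F S) {c : Fin n × Fin n}
    (hc : c ∈ obs F e 0) : c.1 ∈ S := by
  obtain ⟨t, hct, hbefore⟩ := exists_round_of_mem_obs_zero hc
  exact active_subset_of_forall_lt he hs hS t hbefore (he t c hct).1

theorem obs_zero_nonempty_of_mem_active (hs : s ∉ F) {w : Fin n} (hwF : w ∈ F) :
    ∀ {t}, w ∈ active s e t → (obs F e 0).Nonempty
  | 0, hw => absurd (mem_singleton.mp hw ▸ hwF) hs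
  | t + 1, hw => by
    classical
    obtain ⟨c, hc, rfl⟩ := mem_image.mp hw
    have h : ∃ k, ((e k).filter fun c => c.1 ∈ F ∨ c.2 ∈ F) ≠ ∅ :=
      ⟨t, ne_empty_of_mem (mem_filter.mpr ⟨hc, Or.inr hwF⟩)⟩
    unfold obs
    rw [dif_pos h]
    exact nonempty_iff_ne_empty.mpr (Nat.find_spec h)

end Gossip

theorem DPFor.measure_eq_zero {n : ℕ} {P : Fin n → Measure (Exec n)} {F : Finset (Fin n)}
    {ε : ℝ} (hDP : DPFor P F ε) {u v : Fin n} (hu : u ∉ F) (hv : v ∉ F) {A : Set (Exec n)}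
    (hA : MeasurableSet A) (h : P u (obs F ⁻¹' A) = 0) : P v (obs F ⁻¹' A) = 0 :=
  le_antisymm (by simpa [h] using hDP u v hu hv A hA) bot_le

theorem not_dpFor_of_separated {n : ℕ} {G : SimpleGraph (Fin n)} {P : Fin n → Measure (Exec n)}
    {F : Finset (Fin n)} (hF : F.Nonempty) {u v : Fin n} {Su Sv : Set (Fin n)}
    (hu : u ∈ Su) (hv : v ∈ Sv) (huF : u ∉ F) (hvF : v ∉ F) (hdisj : Disjoint Su Sv)
    (hSu : IsClosedOutside G F Su) (hSv : IsClosedOutside G F Sv)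
    (hu_valid : P u {e | ¬ IsValidExec G u e} = 0)
    (hv_valid : P v {e | ¬ IsValidExec G v e} = 0)
    (hv_diss : P v {e | ∀ w : Fin n, ∃ t, w ∈ active v e t} = 1) (ε : ℝ) :
    ¬ DPFor P F ε := by
  set A : Set (Exec n) := {e | ∃ c ∈ e 0, c.1 ∈ Sv}
  have hA : MeasurableSet A :=
    show MeasurableSet ((fun e : Exec n => e 0) ⁻¹' {S | ∃ c ∈ S, c.1 ∈ Sv}) from
      measurable_pi_apply 0 MeasurableSpace.measurableSet_top
  have hAu : P u (obs F ⁻¹' A) = 0 := by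
    refine measure_mono_null ?_ hu_valid
    rintro e ⟨c, hc, hcv⟩ he
    exact hdisj.notMem_of_mem_left (sender_mem_of_mem_obs_zero he hu hSu hc) hcv
  have hAv : P v (obs F ⁻¹' A) ≠ 0 := by
    have hcover : {e | ∀ w : Fin n, ∃ t, w ∈ active v e t} ⊆
        obs F ⁻¹' A ∪ {e | ¬ IsValidExec G v e} := by
      intro e hdiss
      by_cases he : IsValidExec G v e
      · obtain ⟨w, hw⟩ := hF
        obtain ⟨t, hwt⟩ := hdiss w
        obtain ⟨c, hc⟩ := obs_zero_nonempty_of_mem_active hvF hw hwt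
        exact Or.inl ⟨c, hc, sender_mem_of_mem_obs_zero he hv hSv hc⟩
      · exact Or.inr he
    have : (1 : ENNReal) ≤ P v (obs F ⁻¹' A) := calc
      1 = P v {e | ∀ w : Fin n, ∃ t, w ∈ active v e t} := hv_diss.symm
      _ ≤ P v (obs F ⁻¹' A ∪ {e | ¬ IsValidExec G v e}) := measure_mono hcover
      _ ≤ P v (obs F ⁻¹' A) + P v {e | ¬ IsValidExec G v e} := measure_union_le _ _
      _ = P v (obs F ⁻¹' A) := by rw [hv_valid, add_zero]
    exact (one_pos.trans_le this).ne'
  exact fun hDP => hAv (hDP.measure_eq_zero huF hvF hA hAu)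

theorem stmt_13_general {n f : ℕ} (hf : 1 ≤ f) (hfn : f < n - 1)
    (G : SimpleGraph (Fin n))
    (hκ : ∃ K : Finset (Fin n), K.card ≤ f ∧
        ¬ (G.induce {v : Fin n | v ∉ K}).Connected)
    (P : Fin n → Measure (Exec n))
    (hvalid : ∀ s, P s {e | ¬ IsValidExec G s e} = 0)
    (hdiss : ∀ s, P s {e | ∀ v : Fin n, ∃ t, v ∈ active s e t} = 1) :
    ∀ ε : ℝ, ∃ F : Finset (Fin n), F.card = f ∧ ¬ DPFor P F ε := by
  intro ε
  obtain ⟨K, hKf, hK⟩ := hκ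
  set H := G.induce {v : Fin n | v ∉ K}
  have : Nonempty {v : Fin n | v ∉ K} := by
    obtain ⟨x, hx⟩ : Kᶜ.Nonempty := card_pos.mp (by rw [card_compl, Fintype.card_fin]; omega)
    exact ⟨⟨x, by simpa using hx⟩⟩
  obtain ⟨a, b, hab⟩ := SimpleGraph.exists_connectedComponentMk_ne hK
  obtain ⟨F, hKF, hFcard, haF, hbF⟩ := exists_superset_card_eq_notMem_pair hKf
    (by rw [Fintype.card_fin]; omega) a.2 b.2 (fun h => hab (by rw [Subtype.ext h]))
  have hclosed (C : H.ConnectedComponent) : IsClosedOutside G F (Subtype.val '' C.supp) :=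
    fun x hx y hxy hyF => C.mem_image_supp_of_adj hx hxy fun hyK => hyF (hKF hyK)
  have hmem (x : {v : Fin n | v ∉ K}) : x.1 ∈ Subtype.val '' (H.connectedComponentMk x).supp :=
    ⟨x, rfl, rfl⟩
  refine ⟨F, hFcard, not_dpFor_of_separated (card_pos.mp (by omega))
    (hmem a) (hmem b) haF hbF
    (SimpleGraph.ConnectedComponent.disjoint_image_supp hab) (hclosed _) (hclosed _)
    (hvalid a) (hvalid b) (hdiss b) ε⟩

/-- Let `G` be an undirected connected graph of size `n` and let
`f` satisfy `κ(G) ≤ f < n − 1` (here `κ(G) ≤ f` is witnessed by a vertex cut `K`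
of size at most `f` whose removal disconnects `G`).  Then no (valid,
disseminating) gossip protocol on `G` can satisfy `ε`-differential privacy with
finite `ε` against the worst-case adversary with `f` curious nodes: for every
`ε : ℝ` there is a curious set `F` of size `f` for which `ε`-DP fails. -/
theorem stmt_13 {n f : ℕ} (hf : 1 ≤ f) (hfn : f < n - 1)
    (G : SimpleGraph (Fin n)) (hconn : G.Connected)
    (hκ : ∃ K : Finset (Fin n), K.card ≤ f ∧
        ¬ (G.induce {v : Fin n | v ∉ K}).Connected)
    (P : Fin n → Measure (Exec n)) (hprob : ∀ s, IsProbabilityMeasure (P s))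
    (hvalid : ∀ s, P s {e | ¬ IsValidExec G s e} = 0)
    (hdiss : ∀ s, P s {e | ∀ v : Fin n, ∃ t, v ∈ active s e t} = 1) :
    ∀ ε : ℝ, ∃ F : Finset (Fin n), F.card = f ∧ ¬ DPFor P F ε :=
  stmt_13_general hf hfn G hκ P hvalid hdiss

end GossipDP
end

section
/- Let Q be a symmetric (n−f)×(n−f) matrix with nonnegative entries, eigenvalues λ₁(Q) ≤ 1, second-largest absolute eigenvalue at most λ < 1, and ℓ₂-normalized nonnegative first eigenvector φ₁. Then for any ρ ∈ [0,1) with (1−ρ)λ₁(Q) < 1, the matrix (I − (1−ρ)Q)^{-1} = Σ_{t≥0}(1−ρ)^t Q^t satisfies, entrywise, (I − (1−ρ)Q)^{-1} ⪯ I + (1/(1 − (1−ρ)λ₁(Q))) φ₁φ₁ᵀ + (λ(1−ρ)/(1 − λ(1−ρ))) J, where J is the all-ones matrix. -/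
/-!
Let `P` be the orthogonal matrix whose rows are the eigenvectors `φ a`, so that
`Q = Pᵀ diag(μ) P` and `(1 - ρ)^t Q^t = Pᵀ diag(cₐ^t) P` with `cₐ = (1 - ρ) μₐ`. Every
`|cₐ| < 1` (for the top eigenvalue because `μ₀ ≥ 0`, as `Q φ₀ ≥ 0` entrywise), so the Neumann
series sums to `Pᵀ diag((1 - cₐ)⁻¹) P`. For its entries write `(1 - c)⁻¹ = 1 + c / (1 - c)`:
the `1`s give `δᵢⱼ`, of which the terms `a ≠ 0` contribute at most `δᵢⱼ` because `φ₀ ≥ 0`;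
for `a ≠ 0` the correction is at most `L / (1 - L)` in absolute value, `L = λ(1 - ρ)`, and
`∑ₐ |φₐᵢ| |φₐⱼ| ≤ 1` by AM–GM on the unit columns of `P`.
-/

open Matrix Finset

namespace Matrix

variable {n : Type*} [Fintype n]

theorem nonneg_of_mulVec_eq_smul {Q : Matrix n n ℝ} (hQ : ∀ i j, 0 ≤ Q i j) {v : n → ℝ}
    (hv : 0 ≤ v) (hv0 : v ≠ 0) {μ : ℝ} (heig : Q *ᵥ v = μ • v) : 0 ≤ μ := by
  obtain ⟨i, hi⟩ : ∃ i, 0 < v i := by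
    by_contra! h
    exact hv0 (funext fun i => le_antisymm (h i) (hv i))
  have : 0 ≤ μ * v i := by
    rw [← smul_eq_mul, ← Pi.smul_apply, ← heig]
    exact sum_nonneg fun k _ => mul_nonneg (hQ i k) (hv k)
  exact nonneg_of_mul_nonneg_left this hi

variable [DecidableEq n]

theorem transpose_mul_diagonal_mul_apply {R : Type*} [CommSemiring R] (P : Matrix n n R)
    (d : n → R) (i j : n) : (Pᵀ * diagonal d * P) i j = ∑ a, d a * (P a i * P a j) := by
  rw [mul_apply]
  simp only [mul_diagonal, transpose_apply]
  exact sum_congr rfl fun a _ => by ring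

theorem eq_transpose_mul_diagonal_mul_of_mulVec_eq_smul {R : Type*} [CommRing R]
    {P Q : Matrix n n R} {μ : n → R} (hP : Pᵀ * P = 1) (heig : ∀ a, Q *ᵥ P a = μ a • P a) :
    Q = Pᵀ * diagonal μ * P := by
  have hQP : Q * Pᵀ = Pᵀ * diagonal μ := by
    ext i a
    rw [mul_apply, mul_diagonal, transpose_apply, mul_comm (P a i)]
    simpa [mulVec, dotProduct] using congrFun (heig a) i
  rw [← hQP, Matrix.mul_assoc, hP, Matrix.mul_one]

theorem hasSum_pow_conj_diagonal {𝕜 : Type*} [NormedField 𝕜] (U : (Matrix n n 𝕜)ˣ)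
    {d : n → 𝕜} (hd : ∀ a, ‖d a‖ < 1) :
    HasSum (fun t : ℕ => ((U : Matrix n n 𝕜) * diagonal d * (↑U⁻¹ : Matrix n n 𝕜)) ^ t)
      (U * diagonal (fun a => (1 - d a)⁻¹) * (↑U⁻¹ : Matrix n n 𝕜)) := by
  simp_rw [Units.conj_pow, diagonal_pow]
  exact ((Pi.hasSum.2 fun a => hasSum_geometric_of_norm_lt_one (hd a)).matrix_diagonal.mul_left
    _).mul_right _

theorem inv_one_sub_eq_of_hasSum_pow {R : Type*} [CommRing R] [TopologicalSpace R]
    [IsTopologicalRing R] [T2Space R] {A S : Matrix n n R} (h : HasSum (fun t : ℕ => A ^ t) S) :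
    (1 - A)⁻¹ = S :=
  inv_eq_right_inv (h.tsum_eq ▸ h.summable.one_sub_mul_tsum_pow)

theorem sum_abs_mul_abs_le_one {P : Matrix n n ℝ} (hP : Pᵀ * P = 1) (i j : n) :
    ∑ a, |P a i| * |P a j| ≤ 1 := by
  have hcol (k : n) : ∑ a, P a k ^ 2 = 1 := by
    simpa [mul_apply, sq] using congrFun (congrFun hP k) k
  calc ∑ a, |P a i| * |P a j| ≤ ∑ a, (P a i ^ 2 + P a j ^ 2) / 2 :=
        sum_le_sum fun a _ => by
          nlinarith [sq_nonneg (|P a i| - |P a j|), sq_abs (P a i), sq_abs (P a j)]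
    _ = 1 := by rw [← sum_div, sum_add_distrib, hcol, hcol]; norm_num

theorem transpose_mul_diagonal_mul_apply_le {P : Matrix n n ℝ} (hP : Pᵀ * P = 1) {z : n}
    (hz : ∀ i, 0 ≤ P z i) {d : n → ℝ} {K : ℝ} (hK : 0 ≤ K) (hd : ∀ a, a ≠ z → |d a - 1| ≤ K)
    (i j : n) :
    (Pᵀ * diagonal d * P) i j ≤ (1 : Matrix n n ℝ) i j + d z * (P z i * P z j) + K := by
  have hone : (1 : Matrix n n ℝ) i j = ∑ a, P a i * P a j := by
    rw [← hP]; simp [mul_apply]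
  have hsplit : (Pᵀ * diagonal d * P) i j = (1 : Matrix n n ℝ) i j + (d z - 1) * (P z i * P z j)
      + ∑ a ∈ univ.erase z, (d a - 1) * (P a i * P a j) := by
    have h : ∑ a, d a * (P a i * P a j)
        = ∑ a, P a i * P a j + ∑ a, (d a - 1) * (P a i * P a j) := by
      rw [← sum_add_distrib]; exact sum_congr rfl fun a _ => by ring
    rw [transpose_mul_diagonal_mul_apply, h, hone, add_assoc,
      add_sum_erase univ (fun a => (d a - 1) * (P a i * P a j)) (mem_univ z)]
  have hrest : ∑ a ∈ univ.erase z, (d a - 1) * (P a i * P a j) ≤ K :=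
    calc ∑ a ∈ univ.erase z, (d a - 1) * (P a i * P a j)
        ≤ ∑ a ∈ univ.erase z, K * (|P a i| * |P a j|) := by
          refine sum_le_sum fun a ha => (le_abs_self _).trans ?_
          rw [abs_mul, abs_mul]
          exact mul_le_mul_of_nonneg_right (hd a (ne_of_mem_erase ha)) (by positivity)
      _ ≤ ∑ a, K * (|P a i| * |P a j|) :=
          sum_le_sum_of_subset_of_nonneg (subset_univ _) fun a _ _ => by positivity
      _ ≤ K := by
          rw [← mul_sum]; exact mul_le_of_le_one_right hK (sum_abs_mul_abs_le_one hP i j)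
  nlinarith [mul_nonneg (hz i) (hz j)]

end Matrix

theorem abs_inv_one_sub_sub_one_le {x L : ℝ} (hx : |x| ≤ L) (hL : L < 1) :
    |(1 - x)⁻¹ - 1| ≤ L / (1 - L) := by
  have hx1 : 1 - L ≤ 1 - x := by linarith [le_abs_self x]
  have hpos : 0 < 1 - L := by linarith
  have h : (1 - x)⁻¹ - 1 = x / (1 - x) := by
    field_simp [(by linarith : 1 - x ≠ 0)]; ring
  rw [h, abs_div, abs_of_pos (by linarith : 0 < 1 - x)]
  exact div_le_div₀ ((abs_nonneg x).trans hx) hx hpos hx1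

theorem stmt_15_general {m : ℕ} (hm : 0 < m) (Q : Matrix (Fin m) (Fin m) ℝ)
    (hpos : ∀ i j, 0 ≤ Q i j)
    (μ : Fin m → ℝ) (φ : Fin m → Fin m → ℝ)
    (horth : ∀ a b, ∑ i, φ a i * φ b i = if a = b then (1 : ℝ) else 0)
    (heig : ∀ a, Q.mulVec (φ a) = μ a • φ a)
    (hφpos : ∀ i, 0 ≤ φ ⟨0, hm⟩ i)
    (lam : ℝ) (hlam0 : 0 ≤ lam) (hlam1 : lam < 1)
    (hlam : ∀ a, a ≠ ⟨0, hm⟩ → |μ a| ≤ lam)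
    (ρ : ℝ) (hρ0 : 0 ≤ ρ) (hρ1 : ρ < 1)
    (hcontr : (1 - ρ) * μ ⟨0, hm⟩ < 1) :
    HasSum (fun t : ℕ => (1 - ρ) ^ t • Q ^ t) (1 - (1 - ρ) • Q)⁻¹ ∧
    ∀ i j, ((1 - (1 - ρ) • Q)⁻¹) i j ≤
        (1 : Matrix (Fin m) (Fin m) ℝ) i j
          + (1 / (1 - (1 - ρ) * μ ⟨0, hm⟩)) * (φ ⟨0, hm⟩ i * φ ⟨0, hm⟩ j)
          + lam * (1 - ρ) / (1 - lam * (1 - ρ)) := by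
  set z : Fin m := ⟨0, hm⟩
  set P : Matrix (Fin m) (Fin m) ℝ := Matrix.of φ
  have hPPt : P * Pᵀ = 1 := by
    ext a b
    simpa [P, mul_apply, one_apply] using horth a b
  have hPtP : Pᵀ * P = 1 := mul_eq_one_comm.mp hPPt
  set c : Fin m → ℝ := (1 - ρ) • μ
  have hQ : (1 - ρ) • Q = Pᵀ * diagonal c * P := by
    rw [eq_transpose_mul_diagonal_mul_of_mulVec_eq_smul hPtP heig, ← Matrix.smul_mul,
      ← Matrix.mul_smul, ← diagonal_smul]
  have hφ0 : φ z ≠ 0 := fun h => by simpa [h] using horth z z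
  have hμ0 : 0 ≤ μ z := nonneg_of_mulVec_eq_smul hpos hφpos hφ0 (heig z)
  have hcL : ∀ a, a ≠ z → |c a| ≤ lam * (1 - ρ) := fun a ha => by
    rw [show c a = (1 - ρ) * μ a from rfl, abs_mul, abs_of_pos (by linarith), mul_comm]
    exact mul_le_mul_of_nonneg_right (hlam a ha) (by linarith)
  have hL : lam * (1 - ρ) < 1 := by nlinarith
  have hc : ∀ a, ‖c a‖ < 1 := fun a => by
    rw [Real.norm_eq_abs]
    by_cases ha : a = z
    · rw [ha]
      exact (abs_of_nonneg (mul_nonneg (by linarith) hμ0 : 0 ≤ (1 - ρ) * μ z)).trans_lt hcontr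
    · exact (hcL a ha).trans_lt hL
  have hsum : HasSum (fun t : ℕ => ((1 - ρ) • Q) ^ t)
      (Pᵀ * diagonal (fun a => (1 - c a)⁻¹) * P) :=
    hQ ▸ hasSum_pow_conj_diagonal ⟨Pᵀ, P, hPtP, hPPt⟩ hc
  have hinv := inv_one_sub_eq_of_hasSum_pow hsum
  refine ⟨by rw [hinv]; simpa only [smul_pow] using hsum, fun i j => ?_⟩
  rw [hinv, one_div]
  exact transpose_mul_diagonal_mul_apply_le hPtP hφpos (by positivity)
    (fun a ha => abs_inv_one_sub_sub_one_le (hcL a ha) hL) i j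

/-- Let `Q` be a symmetric `m × m` real matrix with nonnegative
entries, an orthonormal eigenbasis `φ` with eigenvalues `μ`, whose largest
eigenvalue `λ₁(Q) = μ 0 ≤ 1` has an (entrywise) nonnegative ℓ₂-normalized
eigenvector `φ 0`, and all other eigenvalues at most `lam < 1` in absolute value.
Then for any `ρ ∈ [0,1)` with `(1−ρ)·λ₁(Q) < 1`, the Neumann series
`Σ_{t≥0} (1−ρ)^t Q^t` converges to `(I − (1−ρ)Q)⁻¹` and, entrywise,
`(I − (1−ρ)Q)⁻¹ ⪯ I + (1/(1 − (1−ρ)λ₁(Q))) φ₁φ₁ᵀ + (lam(1−ρ)/(1 − lam(1−ρ))) J`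
where `J` is the all-ones matrix. -/
theorem stmt_15 {m : ℕ} (hm : 0 < m) (Q : Matrix (Fin m) (Fin m) ℝ)
    (hsymm : Q.IsSymm) (hpos : ∀ i j, 0 ≤ Q i j)
    (μ : Fin m → ℝ) (φ : Fin m → Fin m → ℝ)
    (horth : ∀ a b, ∑ i, φ a i * φ b i = if a = b then (1 : ℝ) else 0)
    (heig : ∀ a, Q.mulVec (φ a) = μ a • φ a)
    (htop : ∀ a, μ a ≤ μ ⟨0, hm⟩)
    (hone : μ ⟨0, hm⟩ ≤ 1)
    (hφpos : ∀ i, 0 ≤ φ ⟨0, hm⟩ i)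
    (lam : ℝ) (hlam0 : 0 ≤ lam) (hlam1 : lam < 1)
    (hlam : ∀ a, a ≠ ⟨0, hm⟩ → |μ a| ≤ lam)
    (ρ : ℝ) (hρ0 : 0 ≤ ρ) (hρ1 : ρ < 1)
    (hcontr : (1 - ρ) * μ ⟨0, hm⟩ < 1) :
    HasSum (fun t : ℕ => (1 - ρ) ^ t • Q ^ t) (1 - (1 - ρ) • Q)⁻¹ ∧
    ∀ i j, ((1 - (1 - ρ) • Q)⁻¹) i j ≤
        (1 : Matrix (Fin m) (Fin m) ℝ) i j
          + (1 / (1 - (1 - ρ) * μ ⟨0, hm⟩)) * (φ ⟨0, hm⟩ i * φ ⟨0, hm⟩ j)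
          + lam * (1 - ρ) / (1 - lam * (1 - ρ)) :=
  stmt_15_general hm Q hpos μ φ horth heig hφpos lam hlam0 hlam1 hlam ρ hρ0 hρ1 hcontr
end

section
/- Let {X_t} be the active sets of a (1+ρ)-cobra walk on an undirected connected graph G started at source s. For any ρ' < ρ, there is a coupling producing sets {X'_t} with X'_t ⊆ X_t for all t, such that {X'_t} is distributed as the active sets of a (1+ρ')-cobra walk started at s. Consequently, the expected dissemination time of the (1+ρ)-cobra walk is a non-increasing function of ρ. -/
open Finset

namespace CobraWalk

variable {V : Type} [Fintype V] [DecidableEq V]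

/-- One round of a `(1+ρ)`-cobra walk, as seen from a single active node `u`
(branching probability `p`): with probability `p` the node branches, informing two
independently and uniformly sampled neighbors (with replacement); otherwise it
informs one uniformly sampled neighbor. -/
noncomputable def nodeStep (G : SimpleGraph V) [DecidableRel G.Adj]
    (hdeg : ∀ u : V, (G.neighborFinset u).Nonempty)
    (p : ENNReal) (hp : p ≤ 1) (u : V) : PMF (Finset V) :=
  (PMF.ofFintype (fun b => cond b p (1 - p)) (by simp [add_tsub_cancel_of_le hp])).bind fun b =>
    if b then
      (PMF.uniformOfFinset _ (hdeg u)).bind fun v₁ =>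
        (PMF.uniformOfFinset _ (hdeg u)).map fun v₂ => ({v₁, v₂} : Finset V)
    else (PMF.uniformOfFinset _ (hdeg u)).map fun v => ({v} : Finset V)

/-- Independent combination of the rounds of a list of active nodes: the next
active set is the union of the sets of informed nodes. -/
noncomputable def listStep (step : V → PMF (Finset V)) : List V → PMF (Finset V)
  | [] => PMF.pure ∅
  | u :: l => (step u).bind fun s => (listStep step l).map fun s' => s ∪ s'

/-- The transition kernel of the active set of a `(1+ρ)`-cobra walk with branching
probability `p`: every active node acts independently and the new active set is
the set of all informed nodes. -/
noncomputable def cobraStep (G : SimpleGraph V) [DecidableRel G.Adj]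
    (hdeg : ∀ u : V, (G.neighborFinset u).Nonempty)
    (p : ENNReal) (hp : p ≤ 1) (X : Finset V) : PMF (Finset V) :=
  listStep (nodeStep G hdeg p hp) X.toList

/-- Transition kernel on states `(covered set, active set)`. -/
noncomputable def fullStep (G : SimpleGraph V) [DecidableRel G.Adj]
    (hdeg : ∀ u : V, (G.neighborFinset u).Nonempty)
    (p : ENNReal) (hp : p ≤ 1) (s : Finset V × Finset V) :
    PMF (Finset V × Finset V) :=
  (cobraStep G hdeg p hp s.2).map fun Y => (s.1 ∪ Y, Y)

/-- `notDone t s` is the probability that, starting from the state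
`s = (covered, active)`, after `t` further rounds of the cobra walk not every node
has been covered, i.e. `Pr[T > t]` for the dissemination time `T`. -/
noncomputable def notDone (G : SimpleGraph V) [DecidableRel G.Adj]
    (hdeg : ∀ u : V, (G.neighborFinset u).Nonempty)
    (p : ENNReal) (hp : p ≤ 1) : ℕ → Finset V × Finset V → ENNReal
  | 0, s => if s.1 = Finset.univ then 0 else 1
  | t + 1, s => ∑' s' : Finset V × Finset V,
      fullStep G hdeg p hp s s' * notDone G hdeg p hp t s'

end CobraWalk

/-!
Run the two walks on shared randomness, node by node: a node active in the slower walk is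
also active in the faster one, both copies use the same neighbour samples, and the slower
copy branches only when the faster one does. The slower walk's active and covered sets then
stay inside the faster walk's, so at every time it is at least as likely to be unfinished;
summing `Pr[T > t]` over `t` compares the expected dissemination times.
-/

namespace PMF

open scoped ENNReal

variable {α β ι : Type*}

theorem bind_congr_of_support {μ : PMF α} {f g : α → PMF β}
    (h : ∀ a ∈ μ.support, f a = g a) : μ.bind f = μ.bind g := by
  ext b
  simp only [bind_apply]
  refine tsum_congr fun a => ?_
  by_cases ha : μ a = 0
  · simp [ha]
  · rw [h a ((mem_support_iff _ _).2 ha)]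

theorem tsum_map_apply_mul (μ : PMF α) (f : α → β) (g : β → ℝ≥0∞) :
    ∑' b, μ.map f b * g b = ∑' a, μ a * g (f a) := by
  simp_rw [map_apply, ← ENNReal.tsum_mul_right]
  rw [ENNReal.tsum_comm]
  refine tsum_congr fun a => ?_
  rw [tsum_eq_single (f a) (fun b hb => by rw [if_neg hb, zero_mul]), if_pos rfl]

def IsMonotoneCoupling [Preorder α] (π : PMF (α × α)) (μ ν : PMF α) : Prop :=
  π.map Prod.fst = μ ∧ π.map Prod.snd = ν ∧ ∀ y ∈ π.support, y.2 ≤ y.1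

section Preorder

variable [Preorder α] [Preorder β]

theorem isMonotoneCoupling_pure {a b : α} (h : b ≤ a) :
    IsMonotoneCoupling (pure (a, b)) (pure a) (pure b) := by
  refine ⟨pure_map _ _, pure_map _ _, fun y hy => ?_⟩
  rw [mem_support_pure_iff] at hy
  exact hy ▸ h

theorem isMonotoneCoupling_map_prodMk (ρ : PMF ι) {g₁ g₂ : ι → α}
    (h : ∀ i ∈ ρ.support, g₂ i ≤ g₁ i) :
    IsMonotoneCoupling (ρ.map fun i => (g₁ i, g₂ i)) (ρ.map g₁) (ρ.map g₂) := by
  refine ⟨map_comp _ _ _, map_comp _ _ _, fun y hy => ?_⟩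
  obtain ⟨i, hi, rfl⟩ := (mem_support_map_iff _ _ _).1 hy
  exact h i hi

namespace IsMonotoneCoupling

variable {π : PMF (α × α)} {μ ν : PMF α}

theorem map (h : IsMonotoneCoupling π μ ν) {g₁ g₂ : α → β}
    (hg : ∀ a b, b ≤ a → g₂ b ≤ g₁ a) :
    IsMonotoneCoupling (π.map fun y => (g₁ y.1, g₂ y.2)) (μ.map g₁) (ν.map g₂) := by
  obtain ⟨hμ, hν, hle⟩ := h
  subst hμ hν
  rw [map_comp, map_comp]
  exact isMonotoneCoupling_map_prodMk π fun y hy => hg _ _ (hle y hy)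

theorem bind (h : IsMonotoneCoupling π μ ν) {K : α × α → PMF (β × β)} {L L' : α → PMF β}
    (hK : ∀ x : α × α, x.2 ≤ x.1 → IsMonotoneCoupling (K x) (L x.1) (L' x.2)) :
    IsMonotoneCoupling (π.bind K) (μ.bind L) (ν.bind L') := by
  obtain ⟨hμ, hν, hle⟩ := h
  subst hμ hν
  refine ⟨?_, ?_, fun y hy => ?_⟩
  · rw [map_bind, bind_map]
    exact bind_congr_of_support fun x hx => (hK x (hle x hx)).1
  · rw [map_bind, bind_map]
    exact bind_congr_of_support fun x hx => (hK x (hle x hx)).2.1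
  · obtain ⟨x, hx, hy⟩ := (mem_support_bind_iff _ _ _).1 hy
    exact (hK x (hle x hx)).2.2 y hy

theorem tsum_mul_le (h : IsMonotoneCoupling π μ ν) {g g' : α → ℝ≥0∞}
    (hg : ∀ a b, b ≤ a → g a ≤ g' b) : ∑' a, μ a * g a ≤ ∑' b, ν b * g' b := by
  obtain ⟨hμ, hν, hle⟩ := h
  subst hμ hν
  rw [tsum_map_apply_mul, tsum_map_apply_mul]
  refine ENNReal.tsum_le_tsum fun y => ?_
  by_cases hy : π y = 0
  · simp [hy]
  · exact mul_le_mul_right (hg _ _ (hle y ((mem_support_iff _ _).2 hy))) _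

end IsMonotoneCoupling

end Preorder

end PMF

namespace CobraWalk

open PMF

section

variable {V : Type} [DecidableEq V]

lemma listStep_perm (step : V → PMF (Finset V)) {l l' : List V} (h : l.Perm l') :
    listStep step l = listStep step l' := by
  induction h with
  | nil => rfl
  | cons a h ih => simp only [listStep, ih]
  | swap a b l =>
    simp only [listStep, PMF.map_bind, PMF.map_comp]
    rw [PMF.bind_comm]
    simp only [Function.comp_def, Finset.union_left_comm]
  | trans _ _ ih1 ih2 => exact ih1.trans ih2

lemma toList_filter_perm {X' X : Finset V} (h : X' ⊆ X) :
    (X.toList.filter (· ∈ X')).Perm X'.toList := by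
  refine (List.perm_ext_iff_of_nodup (X.nodup_toList.filter _) X'.nodup_toList).2 fun a => ?_
  simp only [List.mem_filter, Finset.mem_toList, decide_eq_true_eq]
  exact ⟨fun ha => ha.2, fun ha => ⟨h ha, ha⟩⟩

lemma listStep_monotoneCoupling (step step' : V → PMF (Finset V)) (S : Finset V)
    (h : ∀ u ∈ S, ∃ π, IsMonotoneCoupling π (step u) (step' u)) (l : List V) :
    ∃ π, IsMonotoneCoupling π (listStep step l) (listStep step' (l.filter (· ∈ S))) := by
  induction l with
  | nil => exact ⟨_, isMonotoneCoupling_pure le_rfl⟩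
  | cons u l ih =>
    obtain ⟨π, hπ⟩ := ih
    set l' := l.filter (· ∈ S)
    have hunion := fun (c : PMF (Finset V × Finset V)) {ν : PMF (Finset V)}
        (hc : IsMonotoneCoupling c (step u) ν) =>
      hc.bind (K := fun x => π.map fun y => (x.1 ∪ y.1, x.2 ∪ y.2))
        (L := fun a => (listStep step l).map (a ∪ ·)) (L' := fun b => (listStep step' l').map (b ∪ ·))
        fun x hx => hπ.map fun a b hab => Finset.union_subset_union hx hab
    by_cases hu : u ∈ S
    · obtain ⟨c, hc⟩ := h u hu
      rw [List.filter_cons_of_pos (by simpa using hu)]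
      exact ⟨_, hunion c hc⟩
    · -- a node outside `S` is coupled with the empty set of informed nodes
      have hc := isMonotoneCoupling_map_prodMk (g₁ := id) (g₂ := fun _ => ∅) (step u)
        fun _ _ => Finset.empty_subset _
      rw [PMF.map_id, show (step u).map (fun _ => ∅) = PMF.pure ∅ from PMF.map_const _ _] at hc
      have := hunion _ hc
      simp only [PMF.pure_bind, Finset.empty_union] at this
      rw [show (fun s : Finset V => s) = id from rfl, PMF.map_id] at this
      rw [List.filter_cons_of_neg (by simpa using hu)]
      exact ⟨_, this⟩

def coin (p : ENNReal) (hp : p ≤ 1) : PMF Bool :=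
  PMF.ofFintype (fun b => cond b p (1 - p)) (by simp [add_tsub_cancel_of_le hp])

/-- Branch for the first walk with probability `p`; branch for the second walk only if the
first one branches, and then with conditional probability `q / p`. -/
def coinCoupling (p q : ENNReal) (hp : p ≤ 1) (hq : q ≤ p) : PMF (Bool × Bool) :=
  PMF.ofFintype (fun b => cond b.2 (cond b.1 q 0) (cond b.1 (p - q) (1 - p))) (by
    simp [Fintype.sum_prod_type, add_comm q, tsub_add_cancel_of_le hq,
      add_tsub_cancel_of_le hp])

lemma isMonotoneCoupling_coinCoupling (p q : ENNReal) (hp : p ≤ 1) (hq : q ≤ p) :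
    IsMonotoneCoupling (coinCoupling p q hp hq) (coin p hp) (coin q (hq.trans hp)) := by
  refine ⟨?_, ?_, ?_⟩
  · ext b
    simp only [PMF.map_apply, tsum_fintype, Fintype.sum_prod_type, Fintype.sum_bool]
    cases b <;> simp [coinCoupling, coin, add_comm q, tsub_add_cancel_of_le hq]
  · ext b
    simp only [PMF.map_apply, tsum_fintype, Fintype.sum_prod_type, Fintype.sum_bool]
    cases b <;> simp [coinCoupling, coin, add_comm (p - q), tsub_add_tsub_cancel hp hq]
  · rintro ⟨_ | _, _ | _⟩ hb <;> simp_all [coinCoupling]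

def branchSet (b : Bool) (v : V × V) : Finset V := cond b {v.1, v.2} {v.1}

lemma branchSet_mono (v : V × V) : Monotone fun b => branchSet b v := by
  rintro (_ | _) (_ | _) h
  all_goals first | exact absurd h (by decide) | simp [branchSet]

end

variable {V : Type} [Fintype V] [DecidableEq V]

noncomputable def uniformNeighborPair (G : SimpleGraph V) [DecidableRel G.Adj]
    (hdeg : ∀ u : V, (G.neighborFinset u).Nonempty) (u : V) : PMF (V × V) :=
  (PMF.uniformOfFinset _ (hdeg u)).bind fun v₁ =>
    (PMF.uniformOfFinset _ (hdeg u)).map fun v₂ => (v₁, v₂)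

lemma nodeStep_eq_bind_branchSet (G : SimpleGraph V) [DecidableRel G.Adj]
    (hdeg : ∀ u : V, (G.neighborFinset u).Nonempty) (p : ENNReal) (hp : p ≤ 1) (u : V) :
    nodeStep G hdeg p hp u =
      (coin p hp).bind fun b => (uniformNeighborPair G hdeg u).map (branchSet b) := by
  refine congrArg _ (funext fun b => ?_)
  cases b
  · simp only [uniformNeighborPair, PMF.map_bind, PMF.map_comp]
    exact (PMF.bind_pure_comp _ _).symm.trans
      (congrArg _ (funext fun v => (PMF.map_const _ _).symm))
  · simp only [uniformNeighborPair, PMF.map_bind, PMF.map_comp]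
    rfl

lemma nodeStep_monotoneCoupling (G : SimpleGraph V) [DecidableRel G.Adj]
    (hdeg : ∀ u : V, (G.neighborFinset u).Nonempty)
    {p q : ENNReal} (hp : p ≤ 1) (hq : q ≤ p) (u : V) :
    ∃ π, IsMonotoneCoupling π (nodeStep G hdeg p hp u) (nodeStep G hdeg q (hq.trans hp) u) := by
  rw [nodeStep_eq_bind_branchSet, nodeStep_eq_bind_branchSet]
  exact ⟨_, (isMonotoneCoupling_coinCoupling p q hp hq).bind fun _ hb =>
    isMonotoneCoupling_map_prodMk _ fun v _ => branchSet_mono v hb⟩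

lemma cobraStep_monotoneCoupling (G : SimpleGraph V) [DecidableRel G.Adj]
    (hdeg : ∀ u : V, (G.neighborFinset u).Nonempty)
    {p q : ENNReal} (hp : p ≤ 1) (hq : q ≤ p) {X' X : Finset V} (hX : X' ⊆ X) :
    ∃ π, IsMonotoneCoupling π (cobraStep G hdeg p hp X) (cobraStep G hdeg q (hq.trans hp) X') := by
  obtain ⟨π, hπ⟩ := listStep_monotoneCoupling _ _ X'
    (fun u _ => nodeStep_monotoneCoupling G hdeg hp hq u) X.toList
  rw [listStep_perm _ (toList_filter_perm hX)] at hπ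
  exact ⟨π, hπ⟩

lemma notDone_le_of_le (G : SimpleGraph V) [DecidableRel G.Adj]
    (hdeg : ∀ u : V, (G.neighborFinset u).Nonempty)
    {p q : ENNReal} (hp : p ≤ 1) (hq : q ≤ p) (t : ℕ) :
    ∀ {x y : Finset V × Finset V}, y ≤ x →
      notDone G hdeg p hp t x ≤ notDone G hdeg q (hq.trans hp) t y := by
  induction t with
  | zero =>
    rintro ⟨c, a⟩ ⟨c', a'⟩ ⟨hc, -⟩
    have hcov : c' = Finset.univ → c = Finset.univ := fun h => Finset.univ_subset_iff.1 (h ▸ hc)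
    simp only [notDone]
    split_ifs <;> simp_all
  | succ t ih =>
    rintro ⟨c, a⟩ ⟨c', a'⟩ ⟨hc, ha⟩
    obtain ⟨π, hπ⟩ := cobraStep_monotoneCoupling G hdeg hp hq ha
    simp only [notDone, fullStep, PMF.tsum_map_apply_mul]
    exact hπ.tsum_mul_le fun Y Y' hY => ih ⟨Finset.union_subset_union hc hY, hY⟩

theorem stmt_17_general (G : SimpleGraph V) [DecidableRel G.Adj]
    (hdeg : ∀ u : V, (G.neighborFinset u).Nonempty)
    (p q : ENNReal) (hp : p ≤ 1) (hq : q ≤ p) (s : V) :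
    (∀ X' X : Finset V, X' ⊆ X →
        ∃ π : PMF (Finset V × Finset V),
          π.map Prod.fst = cobraStep G hdeg p hp X ∧
          π.map Prod.snd = cobraStep G hdeg q (hq.trans hp) X' ∧
          ∀ y ∈ π.support, y.2 ⊆ y.1) ∧
    (∑' t : ℕ, notDone G hdeg p hp t ({s}, {s})
        ≤ ∑' t : ℕ, notDone G hdeg q (hq.trans hp) t ({s}, {s})) :=
  ⟨fun _ _ hX => cobraStep_monotoneCoupling G hdeg hp hq hX,
    ENNReal.tsum_le_tsum fun t => notDone_le_of_le G hdeg hp hq t le_rfl⟩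

/-- Consider `(1+ρ)`- and `(1+ρ')`-cobra walks (branching
probabilities `p` and `q ≤ p`) on an undirected connected graph `G`, started at a
source `s`.  There is a coupling keeping the active set of the `(1+ρ')`-walk
inside that of the `(1+ρ)`-walk: for arbitrary active sets `X' ⊆ X` there is a
joint distribution whose marginals are the one-round transitions from `X`
(probability `p`) and from `X'` (probability `q`), supported on pairs `(Y, Y')`
with `Y' ⊆ Y` — which, iterated from `X'_0 = X_0 = {s}`, yields trajectories with
`X'_t ⊆ X_t` for all `t` and the correct laws.  Consequently the expected
dissemination time `E[T] = Σ_{t≥0} Pr[T > t]` is non-increasing in the branching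
probability. -/
theorem stmt_17 (G : SimpleGraph V) [DecidableRel G.Adj] (hG : G.Connected)
    (hdeg : ∀ u : V, (G.neighborFinset u).Nonempty)
    (p q : ENNReal) (hp : p ≤ 1) (hq : q ≤ p) (s : V) :
    (∀ X' X : Finset V, X' ⊆ X →
        ∃ π : PMF (Finset V × Finset V),
          π.map Prod.fst = cobraStep G hdeg p hp X ∧
          π.map Prod.snd = cobraStep G hdeg q (hq.trans hp) X' ∧
          ∀ y ∈ π.support, y.2 ⊆ y.1) ∧
    (∑' t : ℕ, notDone G hdeg p hp t ({s}, {s})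
        ≤ ∑' t : ℕ, notDone G hdeg q (hq.trans hp) t ({s}, {s})) :=
  stmt_17_general G hdeg p q hp hq s

end CobraWalk
end
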